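/- arXiv:2310.09500 — 8 statements merged into one kernel-verified Lean document; each statement's English description precedes it below -/
import Mathlib

section
/- Let B be a finite-dimensional C*-algebra with a faithful state ψ, and let x₊, x₋, y₊, y₋ ∈ B be positive elements with x₊ − x₋ = y₊ − y₋, ψ(x₊) = ψ(y₊), and ψ(x₋) = ψ(y₋). Suppose there is a projection p ∈ B with p·x₊ = x₊ = x₊·p, (1−p)·x₋ = x₋ = x₋·(1−p), and ψ(p·a) = ψ(a·p) for all a ∈ B. Then x₊ = y₊ and x₋ = y₋. -/
/-- positive–negative decomposition lemma.  In a finite-dimensional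
C*-algebra `B` with a faithful state `ψ`, if `x₊ - x₋ = y₊ - y₋` with all four elements
positive, `ψ x₊ = ψ y₊`, `ψ x₋ = ψ y₋`, and there is a projection `p` with
`p x₊ = x₊ = x₊ p`, `(1-p) x₋ = x₋ = x₋ (1-p)` and `ψ (p a) = ψ (a p)` for all `a`,
then `x₊ = y₊` and `x₋ = y₋`. -/
theorem posneg_decomposition
    (B : Type*) [NormedRing B] [StarRing B] [CStarRing B] [NormedAlgebra ℂ B]
    [StarModule ℂ B] [PartialOrder B] [StarOrderedRing B] [FiniteDimensional ℂ B]
    (ψ : B →ₗ[ℂ] ℂ)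
    (hψ1 : ψ 1 = 1)
    (hψpos : ∀ a : B, 0 ≤ a → 0 ≤ (ψ a).re ∧ (ψ a).im = 0)
    (hψfaith : ∀ a : B, 0 ≤ a → ψ a = 0 → a = 0)
    (xp xm yp ym : B)
    (hxp : 0 ≤ xp) (hxm : 0 ≤ xm) (hyp : 0 ≤ yp) (hym : 0 ≤ ym)
    (heq : xp - xm = yp - ym)
    (hψp : ψ xp = ψ yp) (hψm : ψ xm = ψ ym)
    (p : B) (hpstar : star p = p) (hpidem : p * p = p)
    (hp1 : p * xp = xp) (hp2 : xp * p = xp)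
    (hm1 : (1 - p) * xm = xm) (hm2 : xm * (1 - p) = xm)
    (htr : ∀ a : B, ψ (p * a) = ψ (a * p)) :
    xp = yp ∧ xm = ym := by
  letI : CompleteSpace B := FiniteDimensional.complete ℂ B
  letI : CStarAlgebra B := { }
  -- basic algebraic facts
  have hq0 : (1 - p) * p = 0 := by rw [sub_mul, one_mul, hpidem, sub_self]
  have h0q : p * (1 - p) = 0 := by rw [mul_sub, mul_one, hpidem, sub_self]
  have hpm : p * xm = 0 := by
    have : p * ((1 - p) * xm) = p * xm := by rw [hm1]
    rw [← this, ← mul_assoc, h0q, zero_mul]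
  have hmp : xm * p = 0 := by
    have : (xm * (1 - p)) * p = xm * p := by rw [hm2]
    rw [← this, mul_assoc, hq0, mul_zero]
  have hqxp : (1 - p) * xp = 0 := by rw [sub_mul, one_mul, hp1, sub_self]
  have hxpq : xp * (1 - p) = 0 := by rw [mul_sub, mul_one, hp2, sub_self]
  -- introduce ξ as an opaque element
  obtain ⟨ξ, hξ⟩ : ∃ ξ : B, ξ = yp - xp := ⟨_, rfl⟩
  have hξm : ξ = ym - xm := by
    rw [hξ]
    have h := sub_eq_sub_iff_add_eq_add.mp heq
    rw [sub_eq_sub_iff_add_eq_add]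
    exact h.symm.trans (add_comm _ _)
  have ha : (0:B) ≤ p * ym * p := by
    have := star_left_conjugate_nonneg hym p
    rwa [hpstar] at this
  have hb : (0:B) ≤ (1 - p) * yp * (1 - p) := by
    have := star_left_conjugate_nonneg hyp (1 - p)
    rwa [star_sub, star_one, hpstar] at this
  have haux1 : p * ξ = p * ym := by rw [hξm, mul_sub, hpm, sub_zero]
  have haξ : p * ym * p = p * ξ * p := by rw [haux1]
  have haux2 : (1 - p) * ξ = (1 - p) * yp := by rw [hξ, mul_sub, hqxp, sub_zero]
  have hbξ : (1 - p) * yp * (1 - p) = (1 - p) * ξ * (1 - p) := by rw [haux2]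
  -- ψ of cross terms vanish
  have hψξ : ψ ξ = 0 := by rw [hξ, map_sub, hψp, sub_self]
  have hcross1 : ψ (p * ξ * (1 - p)) = 0 := by
    have h := htr (ξ * (1 - p))
    rw [← mul_assoc] at h
    rw [h, mul_assoc, hq0, mul_zero, map_zero]
  have hcross2 : ψ ((1 - p) * ξ * p) = 0 := by
    have h := htr ((1 - p) * ξ)
    rw [← h, ← mul_assoc, h0q, zero_mul, map_zero]
  have hsum : ψ (p * ξ * p) + ψ ((1 - p) * ξ * (1 - p)) = 0 := by
    have hd : p * ξ * p + (1 - p) * ξ * (1 - p) = ξ - p * ξ * (1 - p) - (1 - p) * ξ * p := by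
      noncomm_ring
    rw [← map_add, hd, map_sub, map_sub, hψξ, hcross1, hcross2]; ring
  -- both summands are zero
  have hA := hψpos _ ha
  have hB := hψpos _ hb
  rw [haξ] at hA
  rw [hbξ] at hB
  have hre : (ψ (p * ξ * p)).re + (ψ ((1 - p) * ξ * (1 - p))).re = 0 := by
    have := congrArg Complex.re hsum
    simpa using this
  have hAre : (ψ (p * ξ * p)).re = 0 := by linarith [hA.1, hB.1]
  have hBre : (ψ ((1 - p) * ξ * (1 - p))).re = 0 := by linarith [hA.1, hB.1]
  have hAz : ψ (p * ξ * p) = 0 := Complex.ext (by simp [hAre]) (by simp [hA.2])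
  have hBz : ψ ((1 - p) * ξ * (1 - p)) = 0 := Complex.ext (by simp [hBre]) (by simp [hB.2])
  have hymz : p * ym * p = 0 := hψfaith _ ha (by rw [haξ, hAz])
  have hypz : (1 - p) * yp * (1 - p) = 0 := hψfaith _ hb (by rw [hbξ, hBz])
  -- from q y q = 0 with y ≥ 0 and q selfadjoint, deduce q y = 0 = y q
  have key : ∀ (y q : B), 0 ≤ y → star q = q → q * y * q = 0 → q * y = 0 ∧ y * q = 0 := by
    intro y q hy hq h
    have hs := CFC.sqrt_mul_sqrt_self y hy
    have hsq : star (CFC.sqrt y * q) * (CFC.sqrt y * q) = 0 := by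
      rw [star_mul, (IsSelfAdjoint.of_nonneg (CFC.sqrt_nonneg y)).star_eq, hq]
      calc q * CFC.sqrt y * (CFC.sqrt y * q) = q * (CFC.sqrt y * CFC.sqrt y) * q := by
            noncomm_ring
        _ = 0 := by rw [hs, h]
    have hz : CFC.sqrt y * q = 0 := by
      rwa [CStarRing.star_mul_self_eq_zero_iff] at hsq
    have hyq : y * q = 0 := by rw [← hs, mul_assoc, hz, mul_zero]
    refine ⟨?_, hyq⟩
    have h' : star (y * q) = 0 := by rw [hyq, star_zero]
    rwa [star_mul, hq, (IsSelfAdjoint.of_nonneg hy).star_eq] at h'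
  obtain ⟨hpym, hymp⟩ := key ym p hym hpstar hymz
  obtain ⟨hqyp, hypq⟩ := key yp (1 - p) hyp (by rw [star_sub, star_one, hpstar]) hypz
  -- conclude ξ = 0
  have h1 : p * ξ = 0 := by rw [hξm, mul_sub, hpym, hpm, sub_self]
  have h2 : (1 - p) * ξ = 0 := by rw [hξ, mul_sub, hqyp, hqxp, sub_self]
  have hξ0 : ξ = 0 := by
    have : (p + (1 - p)) * ξ = 0 := by rw [add_mul, h1, h2, add_zero]
    simpa using this
  constructor
  · have := hξ0; rw [hξ] at this
    exact (sub_eq_zero.mp this).symm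
  · have := hξ0; rw [hξm] at this
    exact (sub_eq_zero.mp this).symm
end

section
/- Let V be a finite set of n vertices, E ⊆ V × V an edge set, and let A : ℂ^V → ℂ^V be the adjacency operator with A_{ij} = χ_E(j,i). Equip ℂ^V with the normalized trace τ = (1/n)·Σᵢ, so that the counit is √n-form. Define ∇_A : ℂ^V → ℂ^V ⊗ ℂ^V by ∇_A = n⁻¹(A† ⊗ id − id ⊗ A)∘m†, where m is pointwise multiplication and † denotes GNS adjoints. Then for every f ∈ ℂ^V and (i,j) ∈ V × V one has (∇_A f)(i,j) = (f(j) − f(i))·χ_E(i,j); i.e. ∇_A agrees with the classical graph gradient (coboundary operator) extended by zero outside E. -/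
open Matrix

/-
Testing the adjointness relation against the basis vector `δ_i` shows that `A†` is given
by the conjugate transpose of the matrix of `A`, i.e. `(A† g) i = ∑ k, χ_E(i,k) g k`.
Both `A†` and `A` are then applied to a vector supported at a single vertex, so each term
of `∇_A f (i,j)` picks out the single matrix entry `χ_E(i,j)`, and the factors `n` from
`m†` cancel against `n⁻¹`.
-/

theorem eq_conjTranspose_mulVec_of_adjoint {R V : Type*} [Semiring R] [StarRing R]
    [Fintype V] [DecidableEq V] {M : Matrix V V R} {A B : (V → R) → V → R}
    (hA : ∀ f, A f = M *ᵥ f)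
    (hB : ∀ f g, ∑ i, star (A f i) * g i = ∑ i, star (f i) * B g i) (g : V → R) :
    B g = Mᴴ *ᵥ g := by
  funext i
  simpa [hA, mulVec_single, mulVec, dotProduct, Pi.single_apply, apply_ite star] using
    (hB (Pi.single i 1) g).symm

/-- For a classical directed graph `(V, E)` with adjacency operator
`A f i = ∑ j, χ_E(j,i) f j`, GNS adjoint `A†` (w.r.t. the normalized trace inner
product), and comultiplication `m†(f)(i,j) = n·f(i)·δ_{ij}` (where `n = |V|`), the
quantum graph gradient `∇_A = n⁻¹ (A† ⊗ id − id ⊗ A) ∘ m†` satisfies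
`∇_A f (i,j) = (f j − f i)·χ_E(i,j)`, i.e. it is the classical coboundary operator
extended by zero outside `E`. -/
theorem classical_gradient
    (V : Type*) [Fintype V] [DecidableEq V]
    (E : Finset (V × V))
    (A Adag : (V → ℂ) →ₗ[ℂ] (V → ℂ))
    (hA : ∀ (f : V → ℂ) (i : V), A f i = ∑ j, (if (j, i) ∈ E then 1 else 0) * f j)
    (hAdag : ∀ f g : V → ℂ,
      (∑ i, starRingEnd ℂ (A f i) * g i) = ∑ i, starRingEnd ℂ (f i) * Adag g i)
    (f : V → ℂ) (i j : V) :
    ((Fintype.card V : ℂ))⁻¹ *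
        (Adag (fun k => if k = j then (Fintype.card V : ℂ) * f k else 0) i
          - A (fun k => if i = k then (Fintype.card V : ℂ) * f k else 0) j)
      = (f j - f i) * (if (i, j) ∈ E then 1 else 0) := by
  set n : ℂ := (Fintype.card V : ℂ)
  have hn : n ≠ 0 := Nat.cast_ne_zero.mpr (Fintype.card_pos_iff.mpr ⟨i⟩).ne'
  let M : Matrix V V ℂ := of fun a b => if (b, a) ∈ E then 1 else 0
  have hAM : ∀ g, A g = M *ᵥ g := fun g => funext (hA g)
  have hAdagM : ∀ g, Adag g = Mᴴ *ᵥ g :=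
    eq_conjTranspose_mulVec_of_adjoint hAM (by simpa only [starRingEnd_apply] using hAdag)
  have hδj : (fun k => if k = j then n * f k else 0) = Pi.single j (n * f j) := by
    funext k; by_cases h : k = j <;> simp [h]
  have hδi : (fun k => if i = k then n * f k else 0) = Pi.single i (n * f i) := by
    funext k; by_cases h : i = k <;> simp [h, Ne.symm]
  rw [hAdagM, hAM, hδj, hδi]
  simp only [mulVec, dotProduct_single, conjTranspose_apply, M, of_apply]
  split_ifs
  · simp only [star_one, one_mul, mul_one]
    field_simp
  · simp only [star_zero, zero_mul, mul_zero, sub_zero]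
end

section
/- Let (B, ψ, A) be a quantum graph on a quantum set with δ-form ψ, and define the graph gradient ∇_A : B → B ⊗ B by ∇_A = δ⁻²(A† ⊗ id_B − id_B ⊗ A)∘m†. If A is real (i.e. the associated operator is *-preserving and corresponds to a B-B-bimodule projection P_A on B ⊗ B), then ∇_A = P_A ∘ (1 ⊗ (·) − (·) ⊗ 1), and consequently P_A ∘ ∇_A = ∇_A, i.e. the range of ∇_A is contained in the edge space ran(P_A). -/
/-!
Faithfulness of `ψ` means that an element of `B ⊗ M` is determined by the contractions of its
first leg against the functionals `ψ (b * ·)`, since on a finite-dimensional `B` every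
functional has this form. The contraction of `m† a` is `b * a`;
this gives the bimodule property and coassociativity of `m†`, and, once realness has turned `A†`
into a transpose of `A`, the identity `(id ⊗ (· * x) ∘ A) (m† 1) = (A† ⊗ id) (m† x)`, which
identifies `P_A (1 ⊗ x - x ⊗ 1)` with `∇_A x`. Coassociativity and Schur idempotency give
`(δ² P_A)² = δ² (δ² P_A)`, so `P_A` is idempotent and `P_A ∇_A = P_A P_A (1 ⊗ · - · ⊗ 1) = ∇_A`.
-/

open TensorProduct

/-- The linear functional on `B ⊗ B` given by `ξ ↦ ⟨(pairing against b, c)⟩`, i.e. the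
linear extension of `x ⊗ y ↦ ψ(b·x)·ψ(c·y)`.  Applied with `b = star b'`, `c = star c'`
this is the GNS inner product `⟨b' ⊗ c', ·⟩` on `B ⊗ B`. -/
noncomputable def pairQ (B : Type*) [Ring B] [Algebra ℂ B]
    (ψ : B →ₗ[ℂ] ℂ) (b c : B) : TensorProduct ℂ B B →ₗ[ℂ] ℂ :=
  TensorProduct.lift ((LinearMap.mul ℂ ℂ).compl₁₂
    (ψ ∘ₗ LinearMap.mulLeft ℂ b) (ψ ∘ₗ LinearMap.mulLeft ℂ c))

open LinearMap

theorem TensorProduct.ext_of_forall_lid_rTensor {R V M : Type*} [CommRing R] [AddCommGroup V]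
    [Module R V] [Module.Free R V] [AddCommGroup M] [Module R M] {x y : V ⊗[R] M}
    (h : ∀ f : Module.Dual R V,
      TensorProduct.lid R M (f.rTensor M x) = TensorProduct.lid R M (f.rTensor M y)) :
    x = y := by
  classical
  exact (equivFinsuppOfBasisLeft (Module.Free.chooseBasis R V)).injective <|
    Finsupp.ext fun i => by simp only [equivFinsuppOfBasisLeft_apply, h]

namespace QuantumGraph

section Slice

variable {B : Type*} [Ring B] [Algebra ℂ B] (ψ : B →ₗ[ℂ] ℂ)

noncomputable def slice (b : B) (M : Type*) [AddCommGroup M] [Module ℂ M] :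
    B ⊗[ℂ] M →ₗ[ℂ] M :=
  (TensorProduct.lid ℂ M).toLinearMap ∘ₗ (ψ ∘ₗ mulLeft ℂ b).rTensor M

variable {ψ} {M N : Type*} [AddCommGroup M] [Module ℂ M] [AddCommGroup N] [Module ℂ N]

@[simp]
theorem slice_tmul (b x : B) (m : M) : slice ψ b M (x ⊗ₜ m) = ψ (b * x) • m := by
  simp [slice]

theorem slice_lTensor (b : B) (g : M →ₗ[ℂ] N) (t : B ⊗[ℂ] M) :
    slice ψ b N (g.lTensor B t) = g (slice ψ b M t) := by
  induction t using TensorProduct.induction_on <;> simp_all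

theorem slice_rTensor {b b' : B} {f : B →ₗ[ℂ] B} (hf : ∀ u, ψ (b * f u) = ψ (b' * u))
    (t : B ⊗[ℂ] M) : slice ψ b M (f.rTensor M t) = slice ψ b' M t := by
  induction t using TensorProduct.induction_on <;> simp_all

theorem slice_assoc (b : B) (t : (B ⊗[ℂ] M) ⊗[ℂ] N) :
    slice ψ b (M ⊗[ℂ] N) (TensorProduct.assoc ℂ B M N t) = (slice ψ b M).rTensor N t := by
  induction t using TensorProduct.induction_on with
  | zero => simp
  | add _ _ h₁ h₂ => simp_all
  | tmul s n => induction s using TensorProduct.induction_on <;> simp_all [add_tmul, smul_tmul']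

theorem pairQ_eq_slice (b c : B) (u : B ⊗[ℂ] B) : pairQ B ψ b c u = ψ (c * slice ψ b B u) := by
  induction u using TensorProduct.induction_on <;> simp_all [pairQ, mul_add]

end Slice

section Faithful

variable {B : Type*} [Ring B] [StarRing B] [Algebra ℂ B] {ψ : B →ₗ[ℂ] ℂ}
  {M : Type*} [AddCommGroup M] [Module ℂ M]

theorem eq_zero_of_forall_apply_mul (hψ : ∀ x : B, ψ (star x * x) = 0 → x = 0) {d : B}
    (h : ∀ y, ψ (d * y) = 0) : d = 0 :=
  star_eq_zero.1 <| hψ _ <| by rw [star_star]; exact h _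

theorem eq_of_forall_apply_mul_eq (hψ : ∀ x : B, ψ (star x * x) = 0 → x = 0) {u v : B}
    (h : ∀ c, ψ (c * u) = ψ (c * v)) : u = v :=
  sub_eq_zero.1 <| hψ _ <| by rw [mul_sub, map_sub, h, sub_self]

theorem exists_comp_mulLeft_eq [FiniteDimensional ℂ B]
    (hψ : ∀ x : B, ψ (star x * x) = 0 → x = 0) (f : Module.Dual ℂ B) :
    ∃ b, ψ ∘ₗ mulLeft ℂ b = f := by
  let Φ : B →ₗ[ℂ] Module.Dual ℂ B := llcomp ℂ B B ℂ ψ ∘ₗ mul ℂ B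
  have hΦ : Function.Injective Φ := by
    rw [← ker_eq_bot, ker_eq_bot']
    exact fun d hd => eq_zero_of_forall_apply_mul hψ fun y => congr($hd y)
  exact (injective_iff_surjective_of_finrank_eq_finrank Subspace.dual_finrank_eq.symm).1 hΦ f

theorem eq_of_forall_slice_eq [FiniteDimensional ℂ B] (hψ : ∀ x : B, ψ (star x * x) = 0 → x = 0)
    {x y : B ⊗[ℂ] M} (h : ∀ b, slice ψ b M x = slice ψ b M y) : x = y :=
  ext_of_forall_lid_rTensor fun f => by
    obtain ⟨b, rfl⟩ := exists_comp_mulLeft_eq hψ f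
    exact h b

variable (ψ) in
/-- `mdag` is the adjoint `m†` of multiplication for the GNS inner product of `ψ`. -/
def IsMulAdjoint (mdag : B →ₗ[ℂ] B ⊗[ℂ] B) : Prop :=
  ∀ a b c : B, pairQ B ψ (star b) (star c) (mdag a) = ψ (star (b * c) * a)

variable {mdag : B →ₗ[ℂ] B ⊗[ℂ] B}

theorem pairQ_comul (hmdag : IsMulAdjoint ψ mdag) (a b c : B) :
    pairQ B ψ b c (mdag a) = ψ (c * b * a) := by
  simpa using hmdag a (star b) (star c)

theorem slice_comul (hψ : ∀ x : B, ψ (star x * x) = 0 → x = 0) (hmdag : IsMulAdjoint ψ mdag)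
    (b a : B) : slice ψ b B (mdag a) = b * a :=
  eq_of_forall_apply_mul_eq hψ fun c => by rw [← pairQ_eq_slice, pairQ_comul hmdag, mul_assoc]

section FiniteDimensional

variable [FiniteDimensional ℂ B]

theorem comul_mul_left (hψ : ∀ x : B, ψ (star x * x) = 0 → x = 0) (hmdag : IsMulAdjoint ψ mdag)
    (x a : B) : mdag (x * a) = (mulLeft ℂ x).rTensor B (mdag a) :=
  eq_of_forall_slice_eq hψ fun b => by
    rw [slice_rTensor (b' := b * x) fun u => by simp [mul_assoc], slice_comul hψ hmdag,
      slice_comul hψ hmdag, mul_assoc]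

theorem comul_coassoc (hψ : ∀ x : B, ψ (star x * x) = 0 → x = 0) (hmdag : IsMulAdjoint ψ mdag)
    (a : B) : TensorProduct.assoc ℂ B B B (mdag.rTensor B (mdag a)) = mdag.lTensor B (mdag a) :=
  eq_of_forall_slice_eq hψ fun b => by
    have hslice : slice ψ b B ∘ₗ mdag = mulLeft ℂ b := LinearMap.ext (slice_comul hψ hmdag b)
    rw [slice_assoc, ← rTensor_comp_apply, hslice, slice_lTensor, slice_comul hψ hmdag,
      comul_mul_left hψ hmdag]

theorem lTensor_mulRight_comp_comul_one (hψ : ∀ x : B, ψ (star x * x) = 0 → x = 0)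
    (hmdag : IsMulAdjoint ψ mdag) {A Adag : B →ₗ[ℂ] B} (hreal : ∀ x : B, A (star x) = star (A x))
    (hAdag : ∀ x y : B, ψ (star (A x) * y) = ψ (star x * Adag y)) (x : B) :
    (mulRight ℂ x ∘ₗ A).lTensor B (mdag 1) = Adag.rTensor B (mdag x) :=
  eq_of_forall_slice_eq hψ fun b => by
    -- realness turns the GNS adjoint `A†` into the transpose of `A` for `(x, y) ↦ ψ (x * y)`
    have hAdag' : ∀ u, ψ (b * Adag u) = ψ (A b * u) := fun u => by
      simpa [hreal] using (hAdag (star b) u).symm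
    rw [slice_lTensor, slice_rTensor hAdag', slice_comul hψ hmdag, slice_comul hψ hmdag]
    simp

end FiniteDimensional

end Faithful

section EdgeMap

variable {R B : Type*} [CommSemiring R] [Semiring B] [Algebra R B]

/-- `edgeMap m† A = δ² P_A`. -/
noncomputable def edgeMap (mdag : B →ₗ[R] B ⊗[R] B) (A : B →ₗ[R] B) :
    B ⊗[R] B →ₗ[R] B ⊗[R] B :=
  (mul' R B).lTensor B ∘ₗ (TensorProduct.assoc R B B B).toLinearMap ∘ₗ
    (A.lTensor B).rTensor B ∘ₗ mdag.rTensor B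

variable {mdag : B →ₗ[R] B ⊗[R] B} {A : B →ₗ[R] B}

theorem edgeMap_tmul (u w : B) :
    edgeMap mdag A (u ⊗ₜ w) = (mulRight R w ∘ₗ A).lTensor B (mdag u) := by
  simp only [edgeMap, coe_comp, Function.comp_apply, rTensor_tmul]
  induction mdag u using TensorProduct.induction_on <;> simp_all [add_tmul]

theorem edgeMap_lTensor (f : B →ₗ[R] B) (t : B ⊗[R] B) :
    edgeMap mdag A (f.lTensor B t) =
      (mul' R B ∘ₗ map A f).lTensor B (TensorProduct.assoc R B B B (mdag.rTensor B t)) := by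
  induction t using TensorProduct.induction_on with
  | zero => simp
  | add _ _ h₁ h₂ => simp_all
  | tmul p q =>
    rw [lTensor_tmul, edgeMap_tmul, rTensor_tmul]
    induction mdag p using TensorProduct.induction_on <;> simp_all [add_tmul]

theorem edgeMap_comp_self (hco : ∀ a, TensorProduct.assoc R B B B (mdag.rTensor B (mdag a)) =
      mdag.lTensor B (mdag a)) {c : R} (hSchur : mul' R B ∘ₗ map A A ∘ₗ mdag = c • A) :
    edgeMap mdag A ∘ₗ edgeMap mdag A = c • edgeMap mdag A := by
  have hcomp (w : B) :
      (mul' R B ∘ₗ map A (mulRight R w ∘ₗ A)) ∘ₗ mdag = c • (mulRight R w ∘ₗ A) := by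
    have hmul : mul' R B ∘ₗ map A (mulRight R w ∘ₗ A) = mulRight R w ∘ₗ mul' R B ∘ₗ map A A := by
      ext; simp [mul_assoc]
    simp only [hmul, comp_assoc, hSchur, comp_smul]
  refine TensorProduct.ext' fun u w => ?_
  rw [comp_apply, edgeMap_tmul, edgeMap_lTensor, hco, ← lTensor_comp_apply, hcomp, lTensor_smul,
    LinearMap.smul_apply, LinearMap.smul_apply, edgeMap_tmul]

end EdgeMap

end QuantumGraph

theorem gradient_range_in_edge_space_general
    (B : Type*) [NormedRing B] [StarRing B] [NormedAlgebra ℂ B]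
    [FiniteDimensional ℂ B]
    (ψ : B →ₗ[ℂ] ℂ)
    (hψfaith : ∀ x : B, ψ (star x * x) = 0 → x = 0)
    (δ : ℝ)
    (mdag : B →ₗ[ℂ] TensorProduct ℂ B B)
    (hmdag : ∀ a b c : B, pairQ B ψ (star b) (star c) (mdag a) = ψ (star (b * c) * a))
    (A Adag : B →ₗ[ℂ] B)
    (hSchur : ((δ : ℂ) ^ 2) • A = LinearMap.mul' ℂ B ∘ₗ TensorProduct.map A A ∘ₗ mdag)
    (hreal : ∀ x : B, A (star x) = star (A x))
    (hAdag : ∀ x y : B, ψ (star (A x) * y) = ψ (star x * Adag y))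
    (PA : TensorProduct ℂ B B →ₗ[ℂ] TensorProduct ℂ B B)
    (hPA : PA = (((δ : ℂ) ^ 2)⁻¹) •
      (TensorProduct.map LinearMap.id (LinearMap.mul' ℂ B)
        ∘ₗ (TensorProduct.assoc ℂ B B B).toLinearMap
        ∘ₗ TensorProduct.map (TensorProduct.map LinearMap.id A) LinearMap.id
        ∘ₗ TensorProduct.map mdag LinearMap.id))
    (nabla : B →ₗ[ℂ] TensorProduct ℂ B B)
    (hnabla : nabla = (((δ : ℂ) ^ 2)⁻¹) •
      ((TensorProduct.map Adag LinearMap.id - TensorProduct.map LinearMap.id A) ∘ₗ mdag)) :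
    nabla = PA ∘ₗ ((TensorProduct.mk ℂ B B) 1 - (TensorProduct.mk ℂ B B).flip 1) ∧
      PA ∘ₗ nabla = nabla := by
  have hPA' : PA = ((δ : ℂ) ^ 2)⁻¹ • QuantumGraph.edgeMap mdag A := hPA
  have hgrad : nabla = PA ∘ₗ ((TensorProduct.mk ℂ B B) 1 - (TensorProduct.mk ℂ B B).flip 1) := by
    ext x
    have hkey := QuantumGraph.lTensor_mulRight_comp_comul_one hψfaith hmdag hreal hAdag x
    simp only [hnabla, hPA', LinearMap.smul_apply, coe_comp, Function.comp_apply,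
      LinearMap.sub_apply, coe_smul, mk_apply, flip_apply, Pi.smul_apply, map_sub,
      QuantumGraph.edgeMap_tmul, hkey, mulRight_one, id_comp]
    rfl
  have hidem : PA ∘ₗ PA = PA := by
    rw [hPA', smul_comp, comp_smul, QuantumGraph.edgeMap_comp_self
      (QuantumGraph.comul_coassoc hψfaith hmdag) hSchur.symm, smul_smul, smul_smul]
    congr 1
    rw [mul_right_comm]
    simpa using mul_inv_mul_cancel ((δ : ℂ) ^ 2)⁻¹
  exact ⟨hgrad, by rw [hgrad, ← comp_assoc, hidem]⟩

/-- For a real quantum graph `(B, ψ, A)` on a quantum set with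
`δ`-form `ψ`, comultiplication `m†` (adjoint of multiplication), GNS adjoint `A†`,
associated bimodule projection `P_A = δ⁻²(id ⊗ m)(id ⊗ A ⊗ id)(m† ⊗ id)` and graph
gradient `∇_A = δ⁻²(A† ⊗ id − id ⊗ A)∘m†`, one has
`∇_A = P_A ∘ (1 ⊗ (·) − (·) ⊗ 1)`, and consequently `P_A ∘ ∇_A = ∇_A`. -/
theorem gradient_range_in_edge_space
    (B : Type*) [NormedRing B] [StarRing B] [CStarRing B] [NormedAlgebra ℂ B]
    [StarModule ℂ B] [FiniteDimensional ℂ B]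
    (ψ : B →ₗ[ℂ] ℂ)
    (hψ1 : ψ 1 = 1)
    (hψpos : ∀ x : B, 0 ≤ (ψ (star x * x)).re ∧ (ψ (star x * x)).im = 0)
    (hψfaith : ∀ x : B, ψ (star x * x) = 0 → x = 0)
    (δ : ℝ) (hδ : 0 < δ)
    (mdag : B →ₗ[ℂ] TensorProduct ℂ B B)
    (hmdag : ∀ a b c : B, pairQ B ψ (star b) (star c) (mdag a) = ψ (star (b * c) * a))
    (hδform : LinearMap.mul' ℂ B ∘ₗ mdag = ((δ : ℂ) ^ 2) • LinearMap.id)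
    (A Adag : B →ₗ[ℂ] B)
    (hSchur : ((δ : ℂ) ^ 2) • A = LinearMap.mul' ℂ B ∘ₗ TensorProduct.map A A ∘ₗ mdag)
    (hreal : ∀ x : B, A (star x) = star (A x))
    (hAdag : ∀ x y : B, ψ (star (A x) * y) = ψ (star x * Adag y))
    (PA : TensorProduct ℂ B B →ₗ[ℂ] TensorProduct ℂ B B)
    (hPA : PA = (((δ : ℂ) ^ 2)⁻¹) •
      (TensorProduct.map LinearMap.id (LinearMap.mul' ℂ B)
        ∘ₗ (TensorProduct.assoc ℂ B B B).toLinearMap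
        ∘ₗ TensorProduct.map (TensorProduct.map LinearMap.id A) LinearMap.id
        ∘ₗ TensorProduct.map mdag LinearMap.id))
    (nabla : B →ₗ[ℂ] TensorProduct ℂ B B)
    (hnabla : nabla = (((δ : ℂ) ^ 2)⁻¹) •
      ((TensorProduct.map Adag LinearMap.id - TensorProduct.map LinearMap.id A) ∘ₗ mdag)) :
    nabla = PA ∘ₗ ((TensorProduct.mk ℂ B B) 1 - (TensorProduct.mk ℂ B B).flip 1) ∧
      PA ∘ₗ nabla = nabla :=
  gradient_range_in_edge_space_general B ψ hψfaith δ mdag hmdag A Adag hSchur hreal hAdag PA hPA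
    nabla hnabla
end

section
/- Let (B, ψ, A) be a d-regular real quantum graph. Then the spectral radius r(A) of A as an operator on L²(B, ψ) equals d. -/
open TensorProduct

private def SynQ (V : Type*) : Type _ := V

private theorem exists_on_family {V : Type*} [AddCommGroup V] [Module ℂ V]
    [FiniteDimensional ℂ V] (c : InnerProductSpace.Core ℂ V) :
    ∃ (n : ℕ) (u : Fin n → V),
      (∀ a b, c.inner (u a) (u b) = if a = b then 1 else 0) ∧
      (∀ y : V, ∑ a, c.inner (u a) y • u a = y) := by
  letI : AddCommGroup (SynQ V) := ‹AddCommGroup V›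
  letI : Module ℂ (SynQ V) := ‹Module ℂ V›
  letI cc : InnerProductSpace.Core ℂ (SynQ V) := c
  letI := cc.toNormedAddCommGroup
  letI := InnerProductSpace.ofCore cc.toCore
  haveI : FiniteDimensional ℂ (SynQ V) := ‹FiniteDimensional ℂ V›
  let b := stdOrthonormalBasis ℂ (SynQ V)
  refine ⟨Module.finrank ℂ (SynQ V), fun a => (b a : V), ?_, ?_⟩
  · intro i j
    exact (orthonormal_iff_ite (𝕜 := ℂ)).1 b.orthonormal i j
  · intro y
    exact b.sum_repr' y

private theorem herm_of_pos {B : Type*} [Ring B] [StarRing B] [Algebra ℂ B] [StarModule ℂ B]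
    (ψ : B →ₗ[ℂ] ℂ)
    (hψpos : ∀ x : B, 0 ≤ (ψ (star x * x)).re ∧ (ψ (star x * x)).im = 0) :
    ∀ p q : B, ψ (star q * p) = (starRingEnd ℂ) (ψ (star p * q)) := by
  intro p q
  have him : ∀ w : B, (ψ (star w * w)).im = 0 := fun w => (hψpos w).2
  have e1 : ψ (star (p + q) * (p + q)) =
      ψ (star p * p) + ψ (star p * q) + ψ (star q * p) + ψ (star q * q) := by
    simp only [star_add, add_mul, mul_add, map_add]; ring
  have e2 : ψ (star (p + Complex.I • q) * (p + Complex.I • q)) =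
      ψ (star p * p) + Complex.I * ψ (star p * q) - Complex.I * ψ (star q * p)
        + ψ (star q * q) := by
    simp only [star_add, star_smul, add_mul, mul_add, map_add, smul_mul_assoc, mul_smul_comm,
      map_smul, smul_eq_mul, Complex.star_def, Complex.conj_I]
    linear_combination (- ψ (star q * q)) * Complex.I_sq
  have h1 := him (p + q)
  have h2 := him (p + Complex.I • q)
  rw [e1] at h1
  rw [e2] at h2
  have hpp := him p
  have hqq := him q
  simp only [Complex.add_im, Complex.sub_im, Complex.mul_im, Complex.I_re, Complex.I_im] at h1 h2
  apply Complex.ext <;>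
    simp only [Complex.conj_re, Complex.conj_im] <;> linarith

private theorem cs_of_pos {B : Type*} [Ring B] [StarRing B] [Algebra ℂ B] [StarModule ℂ B]
    (ψ : B →ₗ[ℂ] ℂ)
    (hψpos : ∀ x : B, 0 ≤ (ψ (star x * x)).re ∧ (ψ (star x * x)).im = 0)
    (hψfaith : ∀ x : B, ψ (star x * x) = 0 → x = 0)
    (p q : B) :
    ‖ψ (star p * q)‖ ≤
      Real.sqrt (ψ (star p * p)).re * Real.sqrt (ψ (star q * q)).re := by
  have herm := herm_of_pos ψ hψpos
  set P : ℝ := (ψ (star p * p)).re with hP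
  set Q : ℝ := (ψ (star q * q)).re with hQ
  have hPnn : 0 ≤ P := (hψpos p).1
  have hQnn : 0 ≤ Q := (hψpos q).1
  have hQc : ψ (star q * q) = (Q : ℂ) := by
    apply Complex.ext
    · simp [hQ]
    · simp [(hψpos q).2]
  by_cases hQ0 : Q = 0
  · have : q = 0 := hψfaith q (by rw [hQc, hQ0]; simp)
    simp [this, hQ0]
  have hQpos : 0 < Q := lt_of_le_of_ne hQnn (Ne.symm hQ0)
  set z : ℂ := ψ (star q * p) with hz
  have habs : ‖ψ (star p * q)‖ = ‖z‖ := by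
    rw [herm q p]; exact Complex.norm_conj _
  set c : ℂ := z / (Q : ℂ) with hc
  have key : 0 ≤ (ψ (star (p - c • q) * (p - c • q))).re := (hψpos _).1
  have expand : ψ (star (p - c • q) * (p - c • q)) =
      ψ (star p * p) - c * ψ (star p * q) - (starRingEnd ℂ) c * ψ (star q * p)
        + ((starRingEnd ℂ) c * c) * ψ (star q * q) := by
    simp only [star_sub, star_smul, sub_mul, mul_sub, map_sub, map_add, smul_mul_assoc,
      mul_smul_comm, map_smul, smul_eq_mul, Complex.star_def]
    ring
  have hpq : ψ (star p * q) = (starRingEnd ℂ) z := herm q p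
  have hQne : (Q : ℂ) ≠ 0 := by exact_mod_cast hQ0
  have hzz : z * (starRingEnd ℂ) z = ((‖z‖ ^ 2 : ℝ) : ℂ) := by
    rw [Complex.mul_conj, Complex.sq_norm]
  have expand2 : ψ (star (p - c • q) * (p - c • q)) =
      ψ (star p * p) - ((‖z‖ ^ 2 / Q : ℝ) : ℂ) := by
    rw [expand, hpq, hQc, hc, map_div₀, Complex.conj_ofReal, Complex.ofReal_div, ← hzz]
    field_simp
    ring
  rw [expand2] at key
  simp only [Complex.sub_re, Complex.ofReal_re] at key
  have hzsq : ‖z‖ ^ 2 ≤ P * Q := by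
    have h1 : ‖z‖ ^ 2 / Q ≤ P := by rw [hP]; linarith
    have := mul_le_mul_of_nonneg_right h1 hQnn
    rw [div_mul_cancel₀ _ (ne_of_gt hQpos)] at this
    exact this
  rw [habs]
  calc ‖z‖ = Real.sqrt (‖z‖ ^ 2) := by
        rw [Real.sqrt_sq (norm_nonneg z)]
    _ ≤ Real.sqrt (P * Q) := Real.sqrt_le_sqrt hzsq
    _ = Real.sqrt P * Real.sqrt Q := Real.sqrt_mul hPnn Q

private theorem pairQ_tmul {B : Type*} [Ring B] [Algebra ℂ B]
    (ψ : B →ₗ[ℂ] ℂ) (b c y z : B) :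
    pairQ B ψ b c (y ⊗ₜ[ℂ] z) = ψ (b * y) * ψ (c * z) := by
  simp [pairQ]

private theorem pairQ_sep {B : Type*} [Ring B] [Algebra ℂ B] [FiniteDimensional ℂ B]
    (ψ : B →ₗ[ℂ] ℂ)
    (hnd : ∀ y : B, (∀ z : B, ψ (y * z) = 0) → y = 0) :
    ∀ u : TensorProduct ℂ B B, (∀ b c : B, pairQ B ψ b c u = 0) → u = 0 := by
  intro u hu
  set φ : B →ₗ[ℂ] Module.Dual ℂ B := (LinearMap.mul ℂ B).compr₂ ψ with hφ
  have hφapp : ∀ p y : B, φ p y = ψ (p * y) := fun p y => rfl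
  have hinj : Function.Injective φ := by
    rw [← LinearMap.ker_eq_bot]
    apply LinearMap.ker_eq_bot'.2
    intro m hm
    exact hnd m fun z => by rw [← hφapp, hm]; rfl
  have hsurj : Function.Surjective φ :=
    (LinearMap.injective_iff_surjective_of_finrank_eq_finrank
      (Subspace.dual_finrank_eq).symm).1 hinj
  set v := Module.finBasis ℂ B with hv
  have hcoord : ∀ a b : Fin (Module.finrank ℂ B),
      (v.tensorProduct v).repr u (a, b) = 0 := by
    intro a b
    obtain ⟨p, hp⟩ := hsurj (v.coord a)
    obtain ⟨q, hq⟩ := hsurj (v.coord b)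
    have claim : ∀ w : TensorProduct ℂ B B,
        pairQ B ψ p q w = (v.tensorProduct v).repr w (a, b) := by
      intro w
      induction w using TensorProduct.induction_on with
      | zero => simp
      | tmul y z =>
          rw [pairQ_tmul, Module.Basis.tensorProduct_repr_tmul_apply, ← hφapp p y, ← hφapp q z,
            hp, hq, v.coord_apply, v.coord_apply, smul_eq_mul, mul_comm]
      | add w₁ w₂ ih₁ ih₂ => rw [map_add, map_add, Finsupp.add_apply, ih₁, ih₂]
    rw [← claim u, hu p q]
  apply (v.tensorProduct v).ext_elem
  intro i
  obtain ⟨a, b⟩ := i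
  rw [map_zero, Finsupp.zero_apply, hcoord a b]

/-- For a `d`-regular real quantum graph `(B, ψ, A)`, the spectral
radius of the adjacency operator `A` on `L²(B, ψ)` equals `d`:  `d ∈ Spec(A)` and
every spectral value has modulus at most `d`. -/
theorem spectral_radius_eq_degree
    (B : Type*) [NormedRing B] [StarRing B] [CStarRing B] [NormedAlgebra ℂ B]
    [StarModule ℂ B] [FiniteDimensional ℂ B]
    (ψ : B →ₗ[ℂ] ℂ)
    (hψ1 : ψ 1 = 1)
    (hψpos : ∀ x : B, 0 ≤ (ψ (star x * x)).re ∧ (ψ (star x * x)).im = 0)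
    (hψfaith : ∀ x : B, ψ (star x * x) = 0 → x = 0)
    (δ : ℝ) (hδ : 0 < δ)
    (mdag : B →ₗ[ℂ] TensorProduct ℂ B B)
    (hmdag : ∀ a b c : B, pairQ B ψ (star b) (star c) (mdag a) = ψ (star (b * c) * a))
    (hδform : LinearMap.mul' ℂ B ∘ₗ mdag = ((δ : ℂ) ^ 2) • LinearMap.id)
    (A : B →ₗ[ℂ] B)
    (hSchur : ((δ : ℂ) ^ 2) • A = LinearMap.mul' ℂ B ∘ₗ TensorProduct.map A A ∘ₗ mdag)
    (hreal : ∀ x : B, A (star x) = star (A x))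
    (d : ℝ)
    (hreg1 : A 1 = (d : ℂ) • 1)
    (hreg2 : ∀ x : B, ψ (A x) = (d : ℂ) * ψ x) :
    (d : ℂ) ∈ spectrum ℂ A ∧ ∀ lam ∈ spectrum ℂ A, ‖lam‖ ≤ d := by
  have hone : (1 : B) ≠ 0 := by
    intro h
    rw [h, map_zero] at hψ1
    exact one_ne_zero hψ1.symm
  have herm := herm_of_pos ψ hψpos
  have hψstar : ∀ w : B, ψ (star w) = (starRingEnd ℂ) (ψ w) := by
    intro w
    have h := herm w 1
    rw [star_one, one_mul, mul_one] at h
    rw [h, Complex.conj_conj]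
  constructor
  · rw [← Module.End.hasEigenvalue_iff_mem_spectrum]
    exact Module.End.hasEigenvalue_of_hasEigenvector
      ⟨Module.End.mem_eigenspace_iff.2 hreg1, hone⟩
  intro lam hlam
  obtain ⟨x, hx1, hx2⟩ :=
    (Module.End.hasEigenvalue_iff_mem_spectrum.2 hlam).exists_hasEigenvector
  have hAx : A x = lam • x := Module.End.mem_eigenspace_iff.1 hx1
  -- orthonormal family
  let c : InnerProductSpace.Core ℂ B :=
    { inner := fun p q => ψ (star p * q)
      conj_inner_symm := fun p q => by
        show (starRingEnd ℂ) (ψ (star q * p)) = ψ (star p * q)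
        rw [herm p q, Complex.conj_conj]
      re_inner_nonneg := fun w => (hψpos w).1
      add_left := fun p q r => by
        simp only [star_add, add_mul, map_add]
      smul_left := fun p q r => by
        simp only [star_smul, smul_mul_assoc, map_smul, smul_eq_mul, Complex.star_def]
      definite := fun w h => hψfaith w h }
  obtain ⟨n, u, hon, hexp⟩ := exists_on_family c
  have hon' : ∀ a b, ψ (star (u a) * u b) = if a = b then 1 else 0 := hon
  have hexp' : ∀ y : B, ∑ a, ψ (star (u a) * y) • u a = y := hexp
  -- star expansion
  have hstar_exp : ∀ w : B, ∑ a, ψ (w * u a) • star (u a) = w := by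
    intro w
    have h := congrArg star (hexp' (star w))
    rw [star_sum, star_star] at h
    calc ∑ a, ψ (w * u a) • star (u a)
        = ∑ a, star (ψ (star (u a) * star w) • u a) := by
          apply Finset.sum_congr rfl
          intro a _
          rw [star_smul]
          congr 1
          rw [← star_mul, hψstar, Complex.star_def, Complex.conj_conj]
      _ = w := h
  -- nondegeneracy
  have hnd : ∀ p : B, (∀ z : B, ψ (p * z) = 0) → p = 0 := by
    intro p hp
    have : ψ (star (star p) * star p) = 0 := by rw [star_star]; exact hp (star p)
    have := hψfaith (star p) this
    simpa using congrArg star this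
  -- the coproduct formula
  have hΔ : ∀ y z : B, mdag (y * z) = ∑ a, (y * u a) ⊗ₜ[ℂ] (star (u a) * z) := by
    intro y z
    have key : ∀ b cc : B,
        pairQ B ψ b cc (mdag (y * z) - ∑ a, (y * u a) ⊗ₜ[ℂ] (star (u a) * z)) = 0 := by
      intro b cc
      rw [map_sub, sub_eq_zero]
      have hL : pairQ B ψ b cc (mdag (y * z)) = ψ (cc * (b * (y * z))) := by
        have := hmdag (y * z) (star b) (star cc)
        rw [star_star, star_star] at this
        rw [this, star_mul, star_star, star_star, mul_assoc]
      rw [hL, map_sum]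
      have hR : ∀ a, pairQ B ψ b cc ((y * u a) ⊗ₜ[ℂ] (star (u a) * z)) =
          ψ ((b * y) * u a) * ψ (cc * (star (u a) * z)) := by
        intro a
        rw [pairQ_tmul]
        congr 2
        rw [mul_assoc]
      simp only [hR]
      have : ψ (cc * (b * (y * z))) = ψ (cc * ((∑ a, ψ ((b * y) * u a) • star (u a)) * z)) := by
        rw [hstar_exp (b * y)]
        congr 1
        simp only [mul_assoc]
      rw [this]
      simp only [Finset.sum_mul, Finset.mul_sum, smul_mul_assoc, mul_smul_comm, map_sum,
        map_smul, smul_eq_mul]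
    have := pairQ_sep ψ hnd _ key
    exact sub_eq_zero.1 this
  -- Schur expansion
  have hA : ∀ y z : B, ((δ : ℂ) ^ 2) • A (y * z) = ∑ a, A (y * u a) * A (star (u a) * z) := by
    intro y z
    have h1 := LinearMap.congr_fun hSchur (y * z)
    simp only [LinearMap.smul_apply, LinearMap.comp_apply] at h1
    rw [h1, hΔ y z, map_sum, map_sum]
    apply Finset.sum_congr rfl
    intro a _
    rw [TensorProduct.map_tmul, LinearMap.mul'_apply]
  -- abbreviations
  have hstarA : ∀ a, star (A (star (u a))) = A (u a) := by
    intro a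
    rw [← hreal, star_star]
  have hstarp : ∀ a, star (A (star (u a)) * x) = star x * A (u a) := by
    intro a
    rw [star_mul, hstarA]
  have hstarq : ∀ a, star (A (star (u a) * x)) = A (star x * u a) := by
    intro a
    rw [← hreal, star_mul, star_star]
  set t : ℝ := (ψ (star x * x)).re with ht
  have htc : ψ (star x * x) = (t : ℂ) := by
    apply Complex.ext
    · rw [Complex.ofReal_re]
    · rw [Complex.ofReal_im]
      exact (hψpos x).2
  have htpos : 0 < t := by
    rcases lt_or_eq_of_le (hψpos x).1 with h | h
    · exact h
    · exact absurd (hψfaith x (by rw [htc, ht, ← h]; simp)) hx2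
  -- the three key sum identities
  have hsum1 : (∑ a, A (u a) * A (star (u a))) = (((δ : ℂ) ^ 2) * d) • (1 : B) := by
    have h0 := hA 1 1
    rw [one_mul] at h0
    simp only [one_mul, mul_one] at h0
    rw [← h0, hreg1, smul_smul]
  have F1 : ((δ : ℂ) ^ 2) * (lam * (t : ℂ)) =
      ∑ a, ψ (star (A (star (u a)) * x) * A (star (u a) * x)) := by
    have h0 := hA 1 x
    simp only [one_mul] at h0
    calc ((δ : ℂ) ^ 2) * (lam * (t : ℂ))
        = ((δ : ℂ) ^ 2) * ψ (star x * A x) := by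
          rw [hAx, mul_smul_comm, map_smul, smul_eq_mul, htc]
      _ = ψ (star x * (((δ : ℂ) ^ 2) • A x)) := by
          rw [mul_smul_comm, map_smul, smul_eq_mul]
      _ = ψ (star x * ∑ a, A (u a) * A (star (u a) * x)) := by rw [h0]
      _ = ∑ a, ψ (star (A (star (u a)) * x) * A (star (u a) * x)) := by
          rw [Finset.mul_sum, map_sum]
          apply Finset.sum_congr rfl
          intro a _
          rw [hstarp a, mul_assoc]
  have F2 : ∑ a, ψ (star (A (star (u a)) * x) * (A (star (u a)) * x)) =
      ((δ ^ 2 * d * t : ℝ) : ℂ) := by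
    calc ∑ a, ψ (star (A (star (u a)) * x) * (A (star (u a)) * x))
        = ψ (star x * ((∑ a, A (u a) * A (star (u a))) * x)) := by
          rw [Finset.sum_mul, Finset.mul_sum, map_sum]
          apply Finset.sum_congr rfl
          intro a _
          rw [hstarp a]
          congr 1
          simp only [mul_assoc]
      _ = ((δ ^ 2 * d * t : ℝ) : ℂ) := by
          rw [hsum1, smul_mul_assoc, one_mul, mul_smul_comm, map_smul, smul_eq_mul, htc]
          push_cast
          ring
  have F3 : ∑ a, ψ (star (A (star (u a) * x)) * (A (star (u a) * x))) =
      ((δ ^ 2 * d * t : ℝ) : ℂ) := by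
    have h0 := hA (star x) x
    calc ∑ a, ψ (star (A (star (u a) * x)) * (A (star (u a) * x)))
        = ψ (∑ a, A (star x * u a) * A (star (u a) * x)) := by
          rw [map_sum]
          apply Finset.sum_congr rfl
          intro a _
          rw [hstarq a]
      _ = ψ (((δ : ℂ) ^ 2) • A (star x * x)) := by rw [h0]
      _ = ((δ ^ 2 * d * t : ℝ) : ℂ) := by
          rw [map_smul, smul_eq_mul, hreg2, htc]
          push_cast
          ring
  -- real parts
  set Pf : Fin n → ℝ := fun a => (ψ (star (A (star (u a)) * x) * (A (star (u a)) * x))).re with hPf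
  set Qf : Fin n → ℝ := fun a => (ψ (star (A (star (u a) * x)) * (A (star (u a) * x)))).re with hQf
  have hPnn : ∀ a, 0 ≤ Pf a := fun a => (hψpos _).1
  have hQnn : ∀ a, 0 ≤ Qf a := fun a => (hψpos _).1
  have hsumP : ∑ a, Pf a = δ ^ 2 * d * t := by
    have := congrArg Complex.re F2
    rw [Complex.re_sum, Complex.ofReal_re] at this
    exact this
  have hsumQ : ∑ a, Qf a = δ ^ 2 * d * t := by
    have := congrArg Complex.re F3
    rw [Complex.re_sum, Complex.ofReal_re] at this
    exact this
  set Y : ℝ := δ ^ 2 * d * t with hY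
  have hYnn : 0 ≤ Y := by
    rw [← hsumP]
    exact Finset.sum_nonneg fun a _ => hPnn a
  -- Cauchy-Schwarz chain
  set S : ℝ := ∑ a, Real.sqrt (Pf a) * Real.sqrt (Qf a) with hS
  have hSnn : 0 ≤ S :=
    Finset.sum_nonneg fun a _ => mul_nonneg (Real.sqrt_nonneg _) (Real.sqrt_nonneg _)
  have hstep1 : ‖∑ a, ψ (star (A (star (u a)) * x) * A (star (u a) * x))‖ ≤ S := by
    refine le_trans (norm_sum_le _ _) ?_
    apply Finset.sum_le_sum
    intro a _
    exact cs_of_pos ψ hψpos hψfaith (A (star (u a)) * x) (A (star (u a) * x))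
  have hstep2 : S ^ 2 ≤ Y ^ 2 := by
    have h := Finset.sum_mul_sq_le_sq_mul_sq Finset.univ
      (fun a => Real.sqrt (Pf a)) (fun a => Real.sqrt (Qf a))
    have hP2 : ∀ a : Fin n, Real.sqrt (Pf a) ^ 2 = Pf a := fun a => Real.sq_sqrt (hPnn a)
    have hQ2 : ∀ a : Fin n, Real.sqrt (Qf a) ^ 2 = Qf a := fun a => Real.sq_sqrt (hQnn a)
    simp only [hP2, hQ2] at h
    rw [hsumP, hsumQ] at h
    calc S ^ 2 ≤ (δ ^ 2 * d * t) * (δ ^ 2 * d * t) := h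
      _ = Y ^ 2 := by rw [hY]; ring
  have hstep3 : S ≤ Y := by
    have := Real.sqrt_le_sqrt hstep2
    rwa [Real.sqrt_sq hSnn, Real.sqrt_sq hYnn] at this
  have habsF1 : ‖((δ : ℂ) ^ 2) * (lam * (t : ℂ))‖ =
      δ ^ 2 * ‖lam‖ * t := by
    rw [norm_mul, norm_mul, norm_pow, Complex.norm_real, Complex.norm_real,
      Real.norm_eq_abs, Real.norm_eq_abs, abs_of_pos hδ, abs_of_pos htpos]
    ring
  have hfinal : δ ^ 2 * ‖lam‖ * t ≤ δ ^ 2 * d * t := by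
    rw [← habsF1]
    rw [F1]
    exact le_trans hstep1 hstep3
  have hδt : 0 < δ ^ 2 * t := by positivity
  have : ‖lam‖ * (δ ^ 2 * t) ≤ d * (δ ^ 2 * t) := by
    calc ‖lam‖ * (δ ^ 2 * t) = δ ^ 2 * ‖lam‖ * t := by ring
      _ ≤ δ ^ 2 * d * t := hfinal
      _ = d * (δ ^ 2 * t) := by ring
  exact le_of_mul_le_mul_right (by linarith) hδt
end

section
/- Let (B, ψ, A) be a d-regular undirected quantum graph, i.e. A is real and A = A† on L²(B, ψ). Then the operator norm of A on L²(B, ψ) equals d, and Spec(A) ⊆ [−d, d]. -/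
open TensorProduct

set_option maxHeartbeats 1000000

/-- Type synonym carrying the GNS inner-product structure. -/
def GNSaux (B : Type*) : Type _ := B

instance GNSaux.instAddCommGroup (B : Type*) [Ring B] : AddCommGroup (GNSaux B) :=
  inferInstanceAs (AddCommGroup B)

instance GNSaux.instModule (B : Type*) [Ring B] [Algebra ℂ B] : Module ℂ (GNSaux B) :=
  inferInstanceAs (Module ℂ B)

/-- For a `d`-regular undirected quantum graph `(B, ψ, A)` (`A` is
real and GNS self-adjoint), the operator norm of `A` on `L²(B, ψ)` equals `d`
(`‖Ax‖² ≤ d²‖x‖²` for all `x`, and `d` is the least such bound), and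
`Spec(A) ⊆ [−d, d]`. -/
theorem undirected_norm_eq_degree
    (B : Type*) [NormedRing B] [StarRing B] [CStarRing B] [NormedAlgebra ℂ B]
    [StarModule ℂ B] [FiniteDimensional ℂ B]
    (ψ : B →ₗ[ℂ] ℂ)
    (hψ1 : ψ 1 = 1)
    (hψpos : ∀ x : B, 0 ≤ (ψ (star x * x)).re ∧ (ψ (star x * x)).im = 0)
    (hψfaith : ∀ x : B, ψ (star x * x) = 0 → x = 0)
    (δ : ℝ) (hδ : 0 < δ)
    (mdag : B →ₗ[ℂ] TensorProduct ℂ B B)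
    (hmdag : ∀ a b c : B, pairQ B ψ (star b) (star c) (mdag a) = ψ (star (b * c) * a))
    (hδform : LinearMap.mul' ℂ B ∘ₗ mdag = ((δ : ℂ) ^ 2) • LinearMap.id)
    (A : B →ₗ[ℂ] B)
    (hSchur : ((δ : ℂ) ^ 2) • A = LinearMap.mul' ℂ B ∘ₗ TensorProduct.map A A ∘ₗ mdag)
    (hreal : ∀ x : B, A (star x) = star (A x))
    (hsa : ∀ x y : B, ψ (star (A x) * y) = ψ (star x * A y))
    (d : ℝ)
    (hreg1 : A 1 = (d : ℂ) • 1)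
    (hreg2 : ∀ x : B, ψ (A x) = (d : ℂ) * ψ x) :
    (∀ x : B, (ψ (star (A x) * A x)).re ≤ d ^ 2 * (ψ (star x * x)).re) ∧
      (∀ c : ℝ, 0 ≤ c →
        (∀ x : B, (ψ (star (A x) * A x)).re ≤ c ^ 2 * (ψ (star x * x)).re) → d ≤ c) ∧
      (∀ lam ∈ spectrum ℂ A, lam.im = 0 ∧ -d ≤ lam.re ∧ lam.re ≤ d) := by
  classical
  have him : ∀ x : B, (ψ (star x * x)).im = 0 := fun x => (hψpos x).2
  -- the GNS form is hermitian
  have hherm : ∀ x y : B, ψ (star y * x) = (starRingEnd ℂ) (ψ (star x * y)) := by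
    intro x y
    have h1 : ψ (star (x + y) * (x + y)) =
        ψ (star x * x) + (ψ (star x * y) + ψ (star y * x)) + ψ (star y * y) := by
      simp [star_add, add_mul, mul_add]
      ring
    have h2 : ψ (star (x + Complex.I • y) * (x + Complex.I • y)) =
        ψ (star x * x) + (Complex.I * ψ (star x * y) - Complex.I * ψ (star y * x))
          + ψ (star y * y) := by
      simp [star_add, star_smul, add_mul, mul_add, mul_smul_comm, smul_mul_assoc,
        Complex.conj_I, smul_smul, smul_eq_mul]
      ring
    have e1 : (ψ (star x * y) + ψ (star y * x)).im = 0 := by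
      have h := him (x + y); rw [h1] at h
      simpa [him x, him y] using h
    have e2 : (Complex.I * ψ (star x * y) - Complex.I * ψ (star y * x)).im = 0 := by
      have h := him (x + Complex.I • y); rw [h2] at h
      simpa [him x, him y] using h
    have e2' : (ψ (star x * y)).re - (ψ (star y * x)).re = 0 := by
      simpa [Complex.sub_im, Complex.mul_im, Complex.I_re, Complex.I_im] using e2
    have e1' : (ψ (star x * y)).im + (ψ (star y * x)).im = 0 := by
      simpa using e1
    apply Complex.ext
    · simp only [Complex.conj_re]; linarith
    · simp only [Complex.conj_im]; linarith
  -- GNS inner-product space structure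
  letI gcore : InnerProductSpace.Core ℂ (GNSaux B) :=
  { inner := fun x y => ψ (star (show B from x) * (show B from y))
    conj_inner_symm := by
      intro x y
      show (starRingEnd ℂ) (ψ (star (show B from y) * (show B from x))) = _
      rw [hherm (show B from x) (show B from y)]
      simp
    re_inner_nonneg := fun x => (hψpos _).1
    definite := fun x h => hψfaith _ h
    add_left := by
      intro x y z
      show ψ (star ((show B from x) + (show B from y)) * (show B from z)) = _
      rw [star_add, add_mul, map_add]
    smul_left := by
      intro x y r
      show ψ (star ((r • (show B from x) : B)) * (show B from y)) = _
      rw [star_smul, smul_mul_assoc, map_smul, smul_eq_mul, Complex.star_def] }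
  letI : NormedAddCommGroup (GNSaux B) := gcore.toNormedAddCommGroup
  letI : InnerProductSpace ℂ (GNSaux B) := InnerProductSpace.ofCore gcore.toCore
  haveI : FiniteDimensional ℂ (GNSaux B) := inferInstanceAs (FiniteDimensional ℂ B)
  let e := stdOrthonormalBasis ℂ (GNSaux B)
  let E : Fin (Module.finrank ℂ (GNSaux B)) → B := fun k => (e k : GNSaux B)
  have horth : ∀ i j, ψ (star (E i) * E j) = if i = j then 1 else 0 := by
    intro i j
    exact orthonormal_iff_ite.mp e.orthonormal i j
  -- norms
  let N : B → ℝ := fun u => ‖(show GNSaux B from u)‖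
  have hNsq : ∀ u : B, (ψ (star u * u)).re = N u ^ 2 := by
    intro u
    exact inner_self_eq_norm_sq (𝕜 := ℂ) (show GNSaux B from u)
  have hN0 : ∀ u : B, 0 ≤ N u := fun u => norm_nonneg _
  have hCS : ∀ u z : B, (ψ (star u * z)).re ≤ N u * N z := by
    intro u z
    have h1 : (ψ (star u * z)).re ≤ ‖(ψ (star u * z))‖ := Complex.re_le_norm _
    refine h1.trans ?_
    exact norm_inner_le_norm (𝕜 := ℂ) (show GNSaux B from u) (show GNSaux B from z)
  -- expansion lemma
  have hexpand : ∀ w : B, ∑ k, ψ (star w * E k) • star (E k) = star w := by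
    intro w
    have hsum : ∑ k, (ψ (star (E k) * w)) • E k = w := by
      have h := e.sum_repr (show GNSaux B from w)
      simp only [e.repr_apply_apply] at h
      refine Eq.trans (Finset.sum_congr rfl fun k _ => ?_) h
      congr 1
      exact (e.repr_apply_apply _ _).symm
    calc ∑ k, ψ (star w * E k) • star (E k)
        = ∑ k, star ((ψ (star (E k) * w)) • E k) := by
          refine Finset.sum_congr rfl fun k _ => ?_
          rw [star_smul, hherm (E k) w]
          rfl
      _ = star (∑ k, (ψ (star (E k) * w)) • E k) := (star_sum _ _).symm
      _ = star w := by rw [hsum]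
  -- pairing on simple tensors
  have hpair : ∀ b c x y : B, pairQ B ψ b c (x ⊗ₜ[ℂ] y) = ψ (b * x) * ψ (c * y) := by
    intros; simp [pairQ]
  -- nondegeneracy of the pairing
  have npair : ∀ u : TensorProduct ℂ B B,
      (∀ b c : B, pairQ B ψ (star b) (star c) u = 0) → u = 0 := by
    intro u hu
    let gequiv : GNSaux B ≃ₗ[ℂ] B :=
      { toFun := fun x => x, invFun := fun x => x,
        map_add' := fun _ _ => rfl, map_smul' := fun _ _ => rfl,
        left_inv := fun _ => rfl, right_inv := fun _ => rfl }
    let bB : Module.Basis (Fin (Module.finrank ℂ (GNSaux B))) ℂ B := e.toBasis.map gequiv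
    have hbB : ∀ k, bB k = E k := by
      intro k; simp [bB, gequiv, E]; rfl
    let bT := bB.tensorProduct bB
    have hcoord : ∀ p, bT.repr u p = 0 := by
      intro p
      have h := hu (E p.1) (E p.2)
      rw [← bT.sum_repr u] at h
      simp only [map_sum, map_smul] at h
      have hz : ∀ q ∈ Finset.univ, q ≠ p →
          bT.repr u q • pairQ B ψ (star (E p.1)) (star (E p.2)) (bT q) = 0 := by
        intro q _ hq
        rw [Module.Basis.tensorProduct_apply', hpair, hbB, hbB, horth, horth]
        by_cases h1 : p.1 = q.1
        · have h2 : ¬ p.2 = q.2 := fun h2 => hq (Prod.ext h1.symm h2.symm)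
          simp [h2]
        · simp [h1]
      rw [Finset.sum_eq_single_of_mem p (Finset.mem_univ p) hz] at h
      rw [Module.Basis.tensorProduct_apply', hpair, hbB, hbB, horth, horth] at h
      simpa using h
    have : bT.repr u = 0 := Finsupp.ext hcoord
    have := congrArg bT.repr.symm this
    simpa using this
  -- the key structural formula for mdag
  have hkey : ∀ y a : B, mdag (star y * a) =
      ∑ k, (star y * E k) ⊗ₜ[ℂ] (star (E k) * a) := by
    intro y a
    have main : ∀ b c : B, pairQ B ψ (star b) (star c)
        (mdag (star y * a) - ∑ k, (star y * E k) ⊗ₜ[ℂ] (star (E k) * a)) = 0 := by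
      intro b c
      rw [map_sub, hmdag]
      rw [sub_eq_zero]
      rw [map_sum]
      have h1 : ∀ k, pairQ B ψ (star b) (star c) ((star y * E k) ⊗ₜ[ℂ] (star (E k) * a))
          = ψ (star (y * b) * E k) * ψ (star c * (star (E k) * a)) := by
        intro k
        rw [hpair]
        congr 2
        rw [star_mul, mul_assoc]
      have h2 : ψ (star c * (star (y * b) * a)) =
          ∑ k, ψ (star (y * b) * E k) * ψ (star c * (star (E k) * a)) := by
        conv_lhs => rw [← hexpand (y * b)]
        rw [Finset.sum_mul, Finset.mul_sum, map_sum]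
        refine Finset.sum_congr rfl fun k _ => ?_
        rw [smul_mul_assoc, mul_smul_comm, map_smul, smul_eq_mul]
      rw [Finset.sum_congr rfl fun k _ => h1 k, ← h2]
      rw [star_mul, star_mul, mul_assoc, mul_assoc]
    have := npair _ main
    rw [sub_eq_zero] at this
    exact this
  -- applying the Schur identity
  have hSchur' : ∀ x : B, ((δ : ℂ) ^ 2) • A x
      = LinearMap.mul' ℂ B (TensorProduct.map A A (mdag x)) := by
    intro x
    have := LinearMap.ext_iff.mp hSchur x
    simpa using this
  have hm2 : ∀ (f g : Fin (Module.finrank ℂ (GNSaux B)) → B),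
      LinearMap.mul' ℂ B (TensorProduct.map A A (∑ k, f k ⊗ₜ[ℂ] g k))
        = ∑ k, A (f k) * A (g k) := by
    intro f g
    rw [map_sum, map_sum]
    refine Finset.sum_congr rfl fun k _ => ?_
    rw [TensorProduct.map_tmul, LinearMap.mul'_apply]
  -- mdag at 1, y, star y * y
  have hmd : ∀ a : B, mdag a = ∑ k, E k ⊗ₜ[ℂ] (star (E k) * a) := by
    intro a
    have h := hkey 1 a
    rw [star_one, one_mul] at h
    rw [h]
    exact Finset.sum_congr rfl fun k _ => by rw [one_mul]
  -- the sum of A(E k) * star (A (E k))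
  have hAA : ∑ k, A (E k) * star (A (E k)) = ((δ : ℂ) ^ 2 * (d : ℂ)) • 1 := by
    have h1 : ((δ : ℂ) ^ 2) • A 1 = ∑ k, A (E k) * A (star (E k)) := by
      rw [hSchur' 1, hmd 1]
      have : ∀ k, star (E k) * (1 : B) = star (E k) := fun k => mul_one _
      rw [show (∑ k, E k ⊗ₜ[ℂ] (star (E k) * (1 : B))) = ∑ k, E k ⊗ₜ[ℂ] star (E k) by
        exact Finset.sum_congr rfl fun k _ => by rw [mul_one]]
      exact hm2 _ _
    rw [hreg1, smul_smul] at h1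
    calc ∑ k, A (E k) * star (A (E k)) = ∑ k, A (E k) * A (star (E k)) :=
          Finset.sum_congr rfl fun k _ => by rw [hreal]
      _ = ((δ : ℂ) ^ 2 * (d : ℂ)) • 1 := h1.symm
  -- d is nonnegative
  have hd0 : 0 ≤ d := by
    have h1 := congrArg ψ hAA
    rw [map_smul, hψ1, smul_eq_mul, mul_one, map_sum] at h1
    have h2 : ∀ k, 0 ≤ (ψ (A (E k) * star (A (E k)))).re := by
      intro k
      have := (hψpos (star (A (E k)))).1
      rwa [star_star] at this
    have h3 : 0 ≤ (∑ k, ψ (A (E k) * star (A (E k)))).re := by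
      rw [Complex.re_sum]
      exact Finset.sum_nonneg fun k _ => h2 k
    rw [h1] at h3
    have h4 : ((δ : ℂ) ^ 2 * (d : ℂ)).re = δ ^ 2 * d := by
      push_cast
      simp [← Complex.ofReal_pow]
    rw [h4] at h3
    have hδ2 : (0:ℝ) < δ ^ 2 := by positivity
    nlinarith [h3, hδ2]
  -- Main norm inequality
  have main : ∀ y : B, (ψ (star (A y) * A y)).re ≤ d ^ 2 * (ψ (star y * y)).re := by
    intro y
    set w : Fin (Module.finrank ℂ (GNSaux B)) → B := fun k => A (star (E k) * y) with hw
    set a : Fin (Module.finrank ℂ (GNSaux B)) → B := fun k => A (E k) with ha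
    set v : B := ((δ : ℂ) ^ 2) • A y with hv
    set R : ℝ := (ψ (star y * y)).re with hR
    have hvsum : v = ∑ k, a k * w k := by
      rw [hv, hSchur' y, hmd y, hm2]
    have hpos : ((δ : ℂ) ^ 2) • A (star y * y) = ∑ k, star (w k) * w k := by
      rw [hSchur' _, hkey y y, hm2]
      refine Finset.sum_congr rfl fun k _ => ?_
      congr 1
      rw [← hreal]
      congr 1
      rw [star_mul, star_star]
    have hS2 : ∑ k, N (w k) ^ 2 = (δ ^ 2 * d) * R := by
      have h1 : ∑ k, (ψ (star (w k) * w k)) = ((δ : ℂ) ^ 2) * ((d : ℂ) * ψ (star y * y)) := by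
        rw [← map_sum, ← hpos, map_smul, hreg2, smul_eq_mul]
      have h1' : ((δ : ℂ) ^ 2) * ((d : ℂ) * ψ (star y * y))
          = ((δ ^ 2 * d : ℝ) : ℂ) * ψ (star y * y) := by
        push_cast; ring
      have h2 := congrArg Complex.re (h1.trans h1')
      rw [Complex.re_sum, Complex.re_ofReal_mul] at h2
      rw [← h2]
      exact Finset.sum_congr rfl fun k _ => (hNsq (w k)).symm
    have hS1 : ∑ k, N (star (a k) * v) ^ 2 = (δ ^ 2 * d) * N v ^ 2 := by
      have h1 : ∑ k, ψ (star (star (a k) * v) * (star (a k) * v))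
          = ψ (star v * ((∑ k, a k * star (a k)) * v)) := by
        rw [Finset.sum_mul, Finset.mul_sum, map_sum]
        refine Finset.sum_congr rfl fun k _ => ?_
        congr 1
        rw [star_mul, star_star]
        noncomm_ring
      rw [hAA, smul_mul_assoc, one_mul, mul_smul_comm, map_smul, smul_eq_mul] at h1
      have h1' : ((δ : ℂ) ^ 2 * (d : ℂ)) * ψ (star v * v)
          = ((δ ^ 2 * d : ℝ) : ℂ) * ψ (star v * v) := by
        push_cast; ring
      have h2 := congrArg Complex.re (h1.trans h1')
      rw [Complex.re_sum, Complex.re_ofReal_mul] at h2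
      rw [← hNsq]
      rw [← h2]
      exact Finset.sum_congr rfl fun k _ => (hNsq (star (a k) * v)).symm
    have hchain : N v ^ 2 ≤ ∑ k, N (star (a k) * v) * N (w k) := by
      have hvv : star v * v = ∑ k, star (star (a k) * v) * (w k) := by
        nth_rewrite 2 [hvsum]
        rw [Finset.mul_sum]
        refine Finset.sum_congr rfl fun k _ => ?_
        rw [star_mul, star_star, mul_assoc]
      have h1 : (ψ (star v * v)).re = ∑ k, (ψ (star (star (a k) * v) * w k)).re := by
        rw [hvv, map_sum, Complex.re_sum]
      rw [← hNsq, h1]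
      exact Finset.sum_le_sum fun k _ => hCS _ _
    have hcs2 : (∑ k, N (star (a k) * v) * N (w k)) ^ 2
        ≤ (∑ k, N (star (a k) * v) ^ 2) * (∑ k, N (w k) ^ 2) :=
      Finset.sum_mul_sq_le_sq_mul_sq _ _ _
    have hsum0 : 0 ≤ ∑ k, N (star (a k) * v) * N (w k) :=
      Finset.sum_nonneg fun k _ => mul_nonneg (hN0 _) (hN0 _)
    have hfin : (N v ^ 2) ^ 2 ≤ ((δ ^ 2 * d) * N v ^ 2) * ((δ ^ 2 * d) * R) := by
      calc (N v ^ 2) ^ 2 ≤ (∑ k, N (star (a k) * v) * N (w k)) ^ 2 :=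
            pow_le_pow_left₀ (sq_nonneg _) hchain 2
        _ ≤ (∑ k, N (star (a k) * v) ^ 2) * (∑ k, N (w k) ^ 2) := hcs2
        _ = ((δ ^ 2 * d) * N v ^ 2) * ((δ ^ 2 * d) * R) := by rw [hS1, hS2]
    have hNv : N v = δ ^ 2 * N (A y) := by
      have : ‖(((δ : ℂ) ^ 2) • (show GNSaux B from A y) : GNSaux B)‖
          = ‖((δ : ℂ) ^ 2)‖ * ‖(show GNSaux B from A y)‖ := norm_smul _ _
      rw [show N v = ‖(((δ : ℂ) ^ 2) • (show GNSaux B from A y) : GNSaux B)‖ from rfl, this]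
      congr 1
      rw [norm_pow, Complex.norm_real]
      rw [Real.norm_eq_abs, abs_of_pos hδ]
    have hRnn : 0 ≤ R := (hψpos y).1
    rw [show (ψ (star (A y) * A y)).re = N (A y) ^ 2 from hNsq _]
    rcases eq_or_ne (N (A y)) 0 with h0 | h0
    · rw [h0]
      nlinarith [sq_nonneg d]
    · have hpos' : 0 < N (A y) := lt_of_le_of_ne (hN0 _) (Ne.symm h0)
      rw [hNv] at hfin
      have hδ2 : (0:ℝ) < δ ^ 2 := by positivity
      have hX2 : (0:ℝ) < N (A y) ^ 2 := by positivity
      have hkey2 : (δ ^ 2) ^ 4 * (N (A y) ^ 2 * (N (A y) ^ 2))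
          ≤ (δ ^ 2) ^ 4 * (N (A y) ^ 2 * (d ^ 2 * R)) := by nlinarith [hfin]
      have hkey3 : N (A y) ^ 2 * (N (A y) ^ 2) ≤ N (A y) ^ 2 * (d ^ 2 * R) :=
        le_of_mul_le_mul_left hkey2 (by positivity)
      exact le_of_mul_le_mul_left hkey3 hX2
  refine ⟨main, ?_, ?_⟩
  · -- minimality
    intro c hc hcb
    have h := hcb 1
    rw [hreg1] at h
    have h1 : ψ (star ((d : ℂ) • (1 : B)) * ((d : ℂ) • (1 : B))) = ((d ^ 2 : ℝ) : ℂ) := by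
      rw [star_smul, smul_mul_assoc, mul_smul_comm, smul_smul, star_one, one_mul,
        map_smul, hψ1, smul_eq_mul, mul_one, Complex.star_def, Complex.conj_ofReal]
      push_cast
      ring
    rw [h1, star_one, one_mul, hψ1] at h
    have h' : d ^ 2 ≤ c ^ 2 := by simpa [← Complex.ofReal_pow] using h
    nlinarith [h', hc, sq_nonneg (d - c), sq_nonneg (d + c)]
  · -- spectrum
    intro lam hlam
    have hev : Module.End.HasEigenvalue A lam :=
      Module.End.hasEigenvalue_iff_mem_spectrum.mpr hlam
    obtain ⟨x, hx⟩ := hev.exists_hasEigenvector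
    have hAx : A x = lam • x := hx.apply_eq_smul
    have hx0 : x ≠ 0 := hx.right
    have hψxx : ψ (star x * x) ≠ 0 := fun h => hx0 (hψfaith x h)
    have hre : (ψ (star x * x)).re ≠ 0 := by
      intro h
      exact hψxx (Complex.ext h (him x))
    have hrepos : 0 < (ψ (star x * x)).re := lt_of_le_of_ne (hψpos x).1 (Ne.symm hre)
    -- lam is real
    have hlamreal : lam.im = 0 := by
      have h := hsa x x
      rw [hAx, star_smul, smul_mul_assoc, map_smul, mul_smul_comm, map_smul,
        smul_eq_mul, smul_eq_mul] at h
      have h2 : (starRingEnd ℂ) lam = lam := by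
        have h3 : star lam * ψ (star x * x) = lam * ψ (star x * x) := by
          simpa using h
        simpa using mul_right_cancel₀ hψxx h3
      exact Complex.conj_eq_iff_im.mp h2
    constructor
    · exact hlamreal
    -- |lam| ≤ d
    have h := main x
    rw [hAx] at h
    rw [star_smul, smul_mul_assoc, mul_smul_comm, smul_smul, map_smul, smul_eq_mul] at h
    have hnormsq : (star lam * lam : ℂ) = (Complex.normSq lam : ℂ) := by
      rw [Complex.star_def, Complex.normSq_eq_conj_mul_self]
    rw [hnormsq] at h
    have h2 : Complex.normSq lam * (ψ (star x * x)).re ≤ d ^ 2 * (ψ (star x * x)).re := by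
      have : ((Complex.normSq lam : ℂ) * ψ (star x * x)).re
          = Complex.normSq lam * (ψ (star x * x)).re := by
        simp [Complex.mul_re, him x]
      rwa [this] at h
    have h3 : Complex.normSq lam ≤ d ^ 2 := le_of_mul_le_mul_right (by linarith) hrepos
    have h4 : lam.re ^ 2 ≤ d ^ 2 := by
      have : Complex.normSq lam = lam.re ^ 2 := by
        rw [Complex.normSq_apply, hlamreal]; ring
      linarith [this ▸ h3]
    constructor
    · nlinarith
    · nlinarith
end

section
/- Let (B, ψ, A) be a d-regular undirected irreflexive quantum graph on a quantum set with δ-form ψ. Then Spec(A) ⊆ [−d, d] and 0 ≤ d ≤ δ² − 1. Equivalently, if the graph is reflexive, then Spec(A) ⊆ [−d+2, d] and 1 ≤ d ≤ δ². -/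
open TensorProduct

private def GNSc (B : Type u) : Type u := B

private lemma gns_eigen
    {B : Type*} [Ring B] [StarRing B] [Algebra ℂ B] [StarModule ℂ B] [FiniteDimensional ℂ B]
    (ψ : B →ₗ[ℂ] ℂ)
    (hherm : ∀ x y : B, ψ (star y * x) = (starRingEnd ℂ) (ψ (star x * y)))
    (hre : ∀ x : B, 0 ≤ (ψ (star x * x)).re)
    (hψfaith : ∀ x : B, ψ (star x * x) = 0 → x = 0)
    (T : B →ₗ[ℂ] B)
    (hT : ∀ x y : B, ψ (star (T x) * y) = ψ (star x * T y)) :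
    ∃ (n : ℕ) (b : Fin n → B) (θ : Fin n → ℝ),
      (∀ i j, ψ (star (b i) * b j) = if i = j then 1 else 0) ∧
      (∀ z : B, ∑ i, ψ (star (b i) * z) • b i = z) ∧
      (∀ i, T (b i) = ((θ i : ℝ) : ℂ) • b i) := by
  letI : AddCommGroup (GNSc B) := inferInstanceAs (AddCommGroup B)
  letI : Module ℂ (GNSc B) := inferInstanceAs (Module ℂ B)
  let e : GNSc B ≃ₗ[ℂ] B :=
    { toFun := fun x => show B from x
      map_add' := fun _ _ => rfl
      map_smul' := fun _ _ => rfl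
      invFun := fun x => show GNSc B from x
      left_inv := fun _ => rfl
      right_inv := fun _ => rfl }
  letI core : InnerProductSpace.Core ℂ (GNSc B) :=
    { inner := fun x y => ψ (star (e x) * e y)
      conj_inner_symm := fun x y => by
        show (starRingEnd ℂ) (ψ (star (e y) * e x)) = ψ (star (e x) * e y)
        rw [hherm (e x) (e y)]
        exact Complex.conj_conj _
      re_inner_nonneg := fun x => hre (e x)
      definite := fun x hx => by
        have : e x = 0 := hψfaith (e x) hx
        simpa using e.map_eq_zero_iff.mp this
      add_left := fun x y z => by
        show ψ (star (e x + e y) * e z) = ψ (star (e x) * e z) + ψ (star (e y) * e z)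
        rw [star_add, add_mul, map_add]
      smul_left := fun x y r => by
        show ψ (star (r • e x) * e y) = (starRingEnd ℂ) r * ψ (star (e x) * e y)
        rw [star_smul, smul_mul_assoc, map_smul, smul_eq_mul]
        rfl }
  letI : NormedAddCommGroup (GNSc B) := core.toNormedAddCommGroup
  letI : InnerProductSpace ℂ (GNSc B) := InnerProductSpace.ofCore core.toCore
  haveI : FiniteDimensional ℂ (GNSc B) := Module.Finite.equiv e.symm
  let T' : GNSc B →ₗ[ℂ] GNSc B := e.symm.toLinearMap ∘ₗ T ∘ₗ e.toLinearMap
  have hsym : T'.IsSymmetric := by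
    intro x y
    show ψ (star (e (e.symm (T (e x)))) * e y) = ψ (star (e x) * e (e.symm (T (e y))))
    rw [e.apply_symm_apply, e.apply_symm_apply]
    exact hT (e x) (e y)
  let n := Module.finrank ℂ (GNSc B)
  let b' := hsym.eigenvectorBasis (n := n) rfl
  let θ := hsym.eigenvalues (n := n) rfl
  have heig : ∀ i, T' (b' i) = ((θ i : ℝ) : ℂ) • b' i :=
    fun i => hsym.apply_eigenvectorBasis rfl i
  refine ⟨n, fun i => e (b' i), θ, ?_, ?_, ?_⟩
  · intro i j
    have h := orthonormal_iff_ite.mp b'.orthonormal i j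
    exact h
  · intro z
    have h := b'.sum_repr' (e.symm z)
    have := congrArg e h
    rw [map_sum] at this
    simp [e.apply_symm_apply] at this
    exact this
  · intro i
    have := congrArg e (heig i)
    exact this

private lemma end_pow_eigen {B : Type*} [AddCommGroup B] [Module ℂ B]
    (L : Module.End ℂ B) (v : B) (μ : ℂ) (h : L v = μ • v) :
    ∀ n : ℕ, (L ^ n) v = μ ^ n • v := by
  intro n
  induction n with
  | zero => simp
  | succ n ih =>
    rw [pow_succ, pow_succ, Module.End.mul_apply, h, map_smul, ih, smul_smul, mul_comm]

private lemma end_aeval_eigen {B : Type*} [AddCommGroup B] [Module ℂ B]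
    (L : Module.End ℂ B) (v : B) (μ : ℂ) (h : L v = μ • v) (p : Polynomial ℂ) :
    (Polynomial.aeval L p) v = p.eval μ • v := by
  induction p using Polynomial.induction_on' with
  | add p q hp hq => rw [map_add, LinearMap.add_apply, hp, hq, Polynomial.eval_add, add_smul]
  | monomial n a =>
    rw [Polynomial.aeval_monomial, Polynomial.eval_monomial, Module.End.mul_apply]
    rw [end_pow_eigen L v μ h n]
    rw [map_smul]
    simp [Algebra.algebraMap_eq_smul_one, smul_smul, mul_comm]

private lemma gns_sqrt
    {B : Type*} [Ring B] [StarRing B] [Algebra ℂ B] [StarModule ℂ B] [FiniteDimensional ℂ B]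
    (ψ : B →ₗ[ℂ] ℂ)
    (hherm : ∀ x y : B, ψ (star y * x) = (starRingEnd ℂ) (ψ (star x * y)))
    (hre : ∀ x : B, 0 ≤ (ψ (star x * x)).re)
    (hψfaith : ∀ x : B, ψ (star x * x) = 0 → x = 0)
    (z : B) (hz : star z = z)
    (hpos : ∀ v : B, 0 ≤ (ψ (star v * (z * v))).re) :
    ∃ b : B, star b * b = z := by
  obtain ⟨n, b, θ, hon, hexp, heig⟩ := gns_eigen ψ hherm hre hψfaith
    (LinearMap.mulLeft ℂ z)
    (fun x y => by
      rw [LinearMap.mulLeft_apply, LinearMap.mulLeft_apply, star_mul, hz, mul_assoc])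
  simp only [LinearMap.mulLeft_apply] at heig
  -- eigenvalues are nonnegative
  have hθ : ∀ i, 0 ≤ θ i := by
    intro i
    have h1 : ψ (star (b i) * (z * b i)) = ((θ i : ℝ) : ℂ) := by
      rw [heig i, mul_smul_comm, map_smul, hon i i]
      simp
    have := hpos (b i)
    rw [h1] at this
    simpa using this
  classical
  set s : Finset ℝ := Finset.image θ Finset.univ with hs
  set q : Polynomial ℝ := Lagrange.interpolate s id Real.sqrt with hq
  have hqeval : ∀ i, q.eval (θ i) = Real.sqrt (θ i) := by
    intro i
    have : θ i ∈ s := Finset.mem_image_of_mem θ (Finset.mem_univ i)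
    exact Lagrange.eval_interpolate_at_node Real.sqrt (Set.injOn_id _) this
  set q' : Polynomial ℂ := q.map (algebraMap ℝ ℂ) with hq'
  set bb : B := Polynomial.aeval z q' with hbb
  have hbbsa : star bb = bb := by
    rw [hbb, Polynomial.aeval_eq_sum_range, star_sum]
    refine Finset.sum_congr rfl fun i _ => ?_
    rw [star_smul, star_pow, hz, hq', Polynomial.coeff_map]
    congr 1
    exact Complex.conj_ofReal _
  have hq'eval : ∀ i, q'.eval ((θ i : ℝ) : ℂ) = ((Real.sqrt (θ i) : ℝ) : ℂ) := by
    intro i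
    rw [hq', Polynomial.eval_map]
    have : ((θ i : ℝ) : ℂ) = algebraMap ℝ ℂ (θ i) := rfl
    rw [this, Polynomial.eval₂_at_apply, hqeval i]
    rfl
  -- the key identity bb * bb = z
  have hkey : bb * bb = z := by
    set P : Polynomial ℂ := q' * q' - Polynomial.X with hP
    have haP : Polynomial.aeval z P = bb * bb - z := by
      rw [hP, map_sub, map_mul, Polynomial.aeval_X, hbb]
    have hPi : ∀ i, (Polynomial.aeval z P) * b i = 0 := by
      intro i
      have hlm : (Algebra.lmul ℂ B z) (b i) = ((θ i : ℝ) : ℂ) • b i := heig i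
      calc (Polynomial.aeval z P) * b i
          = (Algebra.lmul ℂ B (Polynomial.aeval z P)) (b i) := rfl
        _ = (Polynomial.aeval (Algebra.lmul ℂ B z) P) (b i) := by
            rw [Polynomial.aeval_algHom_apply]
        _ = P.eval ((θ i : ℝ) : ℂ) • b i := end_aeval_eigen _ _ _ hlm P
        _ = 0 := by
            rw [hP, Polynomial.eval_sub, Polynomial.eval_mul, Polynomial.eval_X, hq'eval i]
            have : ((Real.sqrt (θ i) : ℝ) : ℂ) * ((Real.sqrt (θ i) : ℝ) : ℂ)
                - ((θ i : ℝ) : ℂ) = 0 := by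
              push_cast
              rw [← Complex.ofReal_mul, Real.mul_self_sqrt (hθ i)]
              push_cast
              ring
            rw [this, zero_smul]
    have hP0 : Polynomial.aeval z P = 0 := by
      have h1 : Polynomial.aeval z P = (Polynomial.aeval z P) * 1 := by rw [mul_one]
      rw [h1, ← hexp 1, Finset.mul_sum]
      refine Finset.sum_eq_zero fun i _ => ?_
      rw [mul_smul_comm, hPi i, smul_zero]
    have h2 : bb * bb - z = 0 := haP.symm.trans hP0
    exact sub_eq_zero.mp h2
  exact ⟨bb, by rw [hbbsa, hkey]⟩

private lemma gns_eig_bound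
    {B : Type*} [Ring B] [StarRing B] [Algebra ℂ B] [StarModule ℂ B] [FiniteDimensional ℂ B]
    (ψ : B →ₗ[ℂ] ℂ)
    (hherm : ∀ x y : B, ψ (star y * x) = (starRingEnd ℂ) (ψ (star x * y)))
    (hre : ∀ x : B, 0 ≤ (ψ (star x * x)).re)
    (hψfaith : ∀ x : B, ψ (star x * x) = 0 → x = 0)
    (T : B →ₗ[ℂ] B)
    (hpos2 : ∀ a v : B, 0 ≤ (ψ (star v * (T (T (star a * a)) * v))).re)
    (m : ℝ) (hm : T 1 = ((m : ℝ) : ℂ) • 1)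
    (μ : ℝ) (x : B) (hx : x ≠ 0) (hxsa : star x = x) (heig : T x = ((μ : ℝ) : ℂ) • x) :
    μ ^ 2 ≤ m ^ 2 := by
  obtain ⟨n, b, θ, hon, hexp, heigL⟩ := gns_eigen ψ hherm hre hψfaith
    (LinearMap.mulLeft ℂ x)
    (fun u w => by
      rw [LinearMap.mulLeft_apply, LinearMap.mulLeft_apply, star_mul, hxsa, mul_assoc])
  simp only [LinearMap.mulLeft_apply] at heigL
  -- some eigenvalue of left multiplication by x is nonzero
  have hnz : ∃ i, θ i ≠ 0 := by
    by_contra h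
    push_neg at h
    apply hx
    calc x = x * 1 := (mul_one x).symm
      _ = x * ∑ i, ψ (star (b i) * 1) • b i := by rw [hexp 1]
      _ = ∑ i, ψ (star (b i) * 1) • (x * b i) := by
          rw [Finset.mul_sum]; exact Finset.sum_congr rfl fun i _ => (mul_smul_comm _ _ _)
      _ = 0 := by
          refine Finset.sum_eq_zero fun i _ => ?_
          rw [heigL i, h i]
          simp
  obtain ⟨inz, hinz⟩ := hnz
  have huniv : (Finset.univ : Finset (Fin n)).Nonempty := ⟨inz, Finset.mem_univ _⟩
  obtain ⟨i0, -, hi0⟩ := Finset.exists_max_image Finset.univ (fun i => |θ i|) huniv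
  set c : ℝ := |θ i0| with hc
  have hcpos : 0 < c := lt_of_lt_of_le (abs_pos.mpr hinz) (hi0 inz (Finset.mem_univ _))
  obtain ⟨ε, hεabs, hεc⟩ : ∃ ε : ℝ, |ε| = 1 ∧ ε * θ i0 = c := by
    rcases le_or_gt 0 (θ i0) with h | h
    · exact ⟨1, by simp, by rw [one_mul, hc, abs_of_nonneg h]⟩
    · exact ⟨-1, by simp, by rw [hc, abs_of_neg h]; ring⟩
  set H : B := ((c : ℝ) : ℂ) • (1 : B) - ((ε : ℝ) : ℂ) • x with hH
  have hHsa : star H = H := by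
    rw [hH, star_sub, star_smul, star_smul, star_one, hxsa]
    simp [Complex.conj_ofReal]
  have hcoef : ∀ i, 0 ≤ c - ε * θ i := by
    intro i
    have h1 : ε * θ i ≤ |ε * θ i| := le_abs_self _
    have h2 : |ε * θ i| = |θ i| := by rw [abs_mul, hεabs, one_mul]
    have h3 : |θ i| ≤ c := hi0 i (Finset.mem_univ _)
    linarith
  have hHv : ∀ v : B, ψ (star v * (H * v))
      = ∑ i, ((c - ε * θ i : ℝ) : ℂ) * (ψ (star (b i) * v) * (starRingEnd ℂ) (ψ (star (b i) * v))) := by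
    intro v
    have hxv : x * v = ∑ i, (ψ (star (b i) * v) * ((θ i : ℝ) : ℂ)) • b i := by
      conv_lhs => rw [← hexp v, Finset.mul_sum]
      refine Finset.sum_congr rfl fun i _ => ?_
      rw [mul_smul_comm, heigL i, smul_smul, mul_comm]
    have hcv : ((c : ℝ) : ℂ) • v = ∑ i, (((c : ℝ) : ℂ) * ψ (star (b i) * v)) • b i := by
      conv_lhs => rw [← hexp v]
      rw [Finset.smul_sum]
      exact Finset.sum_congr rfl fun i _ => (smul_smul _ _ _)
    have hv : H * v = ∑ i, (((c - ε * θ i : ℝ) : ℂ) * ψ (star (b i) * v)) • b i := by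
      rw [hH, sub_mul, smul_mul_assoc, smul_mul_assoc, one_mul, hxv, hcv, Finset.smul_sum,
        ← Finset.sum_sub_distrib]
      refine Finset.sum_congr rfl fun i _ => ?_
      rw [smul_smul, ← sub_smul]
      congr 1
      push_cast
      ring
    rw [hv, Finset.mul_sum, map_sum]
    refine Finset.sum_congr rfl fun i _ => ?_
    rw [mul_smul_comm, map_smul, smul_eq_mul]
    rw [hherm (b i) v]
    ring
  have hHpos : ∀ v : B, 0 ≤ (ψ (star v * (H * v))).re := by
    intro v
    rw [hHv v, Complex.re_sum]
    refine Finset.sum_nonneg fun i _ => ?_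
    rw [Complex.mul_conj, ← Complex.ofReal_mul, Complex.ofReal_re]
    exact mul_nonneg (hcoef i) (Complex.normSq_nonneg _)
  obtain ⟨a, ha⟩ := gns_sqrt ψ hherm hre hψfaith H hHsa hHpos
  -- evaluate positivity of T (T H) at the top eigenvector
  have hTTH : T (T H) = (((c * m ^ 2 : ℝ) : ℂ)) • (1 : B) - (((ε * μ ^ 2 : ℝ) : ℂ)) • x := by
    rw [hH, map_sub, map_sub, map_smul, map_smul, map_smul, map_smul, hm, heig,
      map_smul, map_smul, hm, heig]
    rw [smul_smul, smul_smul, smul_smul, smul_smul]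
    push_cast
    ring_nf
  have hval : ψ (star (b i0) * (T (T (star a * a)) * b i0))
      = ((c * m ^ 2 - c * μ ^ 2 : ℝ) : ℂ) := by
    rw [ha, hTTH]
    have h1 : (((c * m ^ 2 : ℝ) : ℂ) • (1 : B) - ((ε * μ ^ 2 : ℝ) : ℂ) • x) * b i0
        = ((c * m ^ 2 : ℝ) : ℂ) • b i0 - (((ε * μ ^ 2 : ℝ) : ℂ) * ((θ i0 : ℝ) : ℂ)) • b i0 := by
      rw [sub_mul, smul_mul_assoc, smul_mul_assoc, one_mul, heigL i0, smul_smul]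
    rw [h1, mul_sub, map_sub, mul_smul_comm, mul_smul_comm, map_smul, map_smul, hon i0 i0]
    have h2 : ε * μ ^ 2 * θ i0 = c * μ ^ 2 := by
      calc ε * μ ^ 2 * θ i0 = (ε * θ i0) * μ ^ 2 := by ring
      _ = c * μ ^ 2 := by rw [hεc]
    simp only [eq_self_iff_true, if_true, smul_eq_mul, mul_one]
    norm_cast
    rw [h2]
  have := hpos2 a (b i0)
  rw [hval, Complex.ofReal_re] at this
  nlinarith [hcpos]
set_option maxHeartbeats 4000000 in
/-- Let `(B, ψ, A)` be a `d`-regular undirected quantum graph on a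
quantum set with `δ`-form `ψ`.  If the graph is irreflexive (`A • id = 0`, i.e.
`m ∘ (A ⊗ id) ∘ m† = 0`), then `Spec(A) ⊆ [−d, d]` and `0 ≤ d ≤ δ² − 1`;
equivalently, if the graph is reflexive (`A • id = id`, i.e.
`m ∘ (A ⊗ id) ∘ m† = δ²·id`), then `Spec(A) ⊆ [−d+2, d]` and `1 ≤ d ≤ δ²`. -/
theorem spectrum_bounds_irreflexive_reflexive
    (B : Type*) [NormedRing B] [StarRing B] [CStarRing B] [NormedAlgebra ℂ B]
    [StarModule ℂ B] [FiniteDimensional ℂ B]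
    (ψ : B →ₗ[ℂ] ℂ)
    (hψ1 : ψ 1 = 1)
    (hψpos : ∀ x : B, 0 ≤ (ψ (star x * x)).re ∧ (ψ (star x * x)).im = 0)
    (hψfaith : ∀ x : B, ψ (star x * x) = 0 → x = 0)
    (δ : ℝ) (hδ : 0 < δ)
    (mdag : B →ₗ[ℂ] TensorProduct ℂ B B)
    (hmdag : ∀ a b c : B, pairQ B ψ (star b) (star c) (mdag a) = ψ (star (b * c) * a))
    (hδform : LinearMap.mul' ℂ B ∘ₗ mdag = ((δ : ℂ) ^ 2) • LinearMap.id)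
    (A : B →ₗ[ℂ] B)
    (hSchur : ((δ : ℂ) ^ 2) • A = LinearMap.mul' ℂ B ∘ₗ TensorProduct.map A A ∘ₗ mdag)
    (hreal : ∀ x : B, A (star x) = star (A x))
    (hsa : ∀ x y : B, ψ (star (A x) * y) = ψ (star x * A y))
    (d : ℝ)
    (hreg1 : A 1 = (d : ℂ) • 1)
    (hreg2 : ∀ x : B, ψ (A x) = (d : ℂ) * ψ x) :
    ((LinearMap.mul' ℂ B ∘ₗ TensorProduct.map A LinearMap.id ∘ₗ mdag = 0) →
      (∀ lam ∈ spectrum ℂ A, lam.im = 0 ∧ -d ≤ lam.re ∧ lam.re ≤ d) ∧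
        0 ≤ d ∧ d ≤ δ ^ 2 - 1) ∧
    ((LinearMap.mul' ℂ B ∘ₗ TensorProduct.map A LinearMap.id ∘ₗ mdag
        = ((δ : ℂ) ^ 2) • LinearMap.id) →
      (∀ lam ∈ spectrum ℂ A, lam.im = 0 ∧ -d + 2 ≤ lam.re ∧ lam.re ≤ d) ∧
        1 ≤ d ∧ d ≤ δ ^ 2) := by
  have hδ2ne : ((δ : ℂ) ^ 2) ≠ 0 := by
    simp only [ne_eq, pow_eq_zero_iff, Complex.ofReal_eq_zero, OfNat.ofNat_ne_zero,
      not_false_eq_true, and_true]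
    exact hδ.ne'
  have hδ2pos : (0 : ℝ) < δ ^ 2 := by positivity
  -- hermitian property of the GNS form
  have hherm : ∀ x y : B, ψ (star y * x) = (starRingEnd ℂ) (ψ (star x * y)) := by
    intro x y
    have expand1 : ψ (star (x + y) * (x + y))
        = ψ (star x * x) + ψ (star y * y) + (ψ (star x * y) + ψ (star y * x)) := by
      rw [star_add, add_mul, mul_add, mul_add]
      rw [map_add, map_add, map_add]
      ring
    have expand2 : ψ (star (x + Complex.I • y) * (x + Complex.I • y))
        = ψ (star x * x) + ψ (star y * y)
          + Complex.I * (ψ (star x * y) - ψ (star y * x)) := by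
      rw [star_add, star_smul, add_mul, mul_add, mul_add]
      rw [map_add, map_add, map_add]
      simp only [smul_mul_assoc, mul_smul_comm, smul_smul, map_smul, smul_eq_mul,
        Complex.star_def, Complex.conj_I]
      linear_combination (-(ψ (star y * y))) * Complex.I_mul_I
    have h1 := (hψpos (x + y)).2
    rw [expand1] at h1
    simp only [Complex.add_im, (hψpos x).2, (hψpos y).2, zero_add] at h1
    have h2 := (hψpos (x + Complex.I • y)).2
    rw [expand2] at h2
    simp only [Complex.add_im, (hψpos x).2, (hψpos y).2, zero_add, Complex.mul_im,
      Complex.I_re, Complex.I_im, zero_mul, one_mul] at h2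
    apply Complex.ext
    · have h2' : (ψ (star x * y) - ψ (star y * x)).re = 0 := by linarith
      simp only [Complex.sub_re] at h2'
      simp only [Complex.conj_re]
      linarith
    · simp only [Complex.conj_im]
      linarith
  have hre : ∀ x : B, 0 ≤ (ψ (star x * x)).re := fun x => (hψpos x).1
  have hstar1 : ∀ z : B, ψ (star z) = (starRingEnd ℂ) (ψ z) := by
    intro z
    have := hherm z 1
    rw [star_one, one_mul, mul_one] at this
    rw [this, Complex.conj_conj]
  -- orthonormal basis for the GNS inner product
  obtain ⟨n, f, -, hon, hexp, -⟩ := gns_eigen ψ hherm hre hψfaith LinearMap.id (fun x y => rfl)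
  -- expansion of elements of the tensor square
  have hexp2 : ∀ ξ : TensorProduct ℂ B B,
      ξ = ∑ i, ∑ j, (pairQ B ψ (star (f i)) (star (f j))) ξ • (f i ⊗ₜ[ℂ] f j) := by
    intro ξ
    induction ξ using TensorProduct.induction_on with
    | zero => simp
    | tmul u v =>
      have hp : ∀ i j, (pairQ B ψ (star (f i)) (star (f j))) (u ⊗ₜ[ℂ] v)
          = ψ (star (f i) * u) * ψ (star (f j) * v) := fun i j => rfl
      calc u ⊗ₜ[ℂ] v = (∑ i, ψ (star (f i) * u) • f i) ⊗ₜ[ℂ] v := by rw [hexp u]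
        _ = ∑ i, ψ (star (f i) * u) • (f i ⊗ₜ[ℂ] v) := by
            rw [TensorProduct.sum_tmul]
            exact Finset.sum_congr rfl fun i _ => by rw [TensorProduct.smul_tmul']
        _ = ∑ i, ψ (star (f i) * u) • (f i ⊗ₜ[ℂ] (∑ j, ψ (star (f j) * v) • f j)) := by
            rw [hexp v]
        _ = ∑ i, ∑ j, (pairQ B ψ (star (f i)) (star (f j))) (u ⊗ₜ[ℂ] v) • (f i ⊗ₜ[ℂ] f j) := by
            refine Finset.sum_congr rfl fun i _ => ?_
            rw [TensorProduct.tmul_sum, Finset.smul_sum]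
            refine Finset.sum_congr rfl fun j _ => ?_
            rw [hp, TensorProduct.tmul_smul, smul_smul]
    | add ξ η hξ hη =>
      conv_lhs => rw [hξ, hη]
      rw [← Finset.sum_add_distrib]
      refine Finset.sum_congr rfl fun i _ => ?_
      rw [← Finset.sum_add_distrib]
      refine Finset.sum_congr rfl fun j _ => ?_
      rw [map_add, add_smul]
  -- coordinates of mdag
  have hdc : ∀ x : B, mdag x = ∑ i, ∑ j, ψ (star (f i * f j) * x) • (f i ⊗ₜ[ℂ] f j) := by
    intro x
    conv_lhs => rw [hexp2 (mdag x)]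
    exact Finset.sum_congr rfl fun i _ => Finset.sum_congr rfl fun j _ => by
      rw [hmdag x (f i) (f j)]
  have hmul : ∀ (S T : B →ₗ[ℂ] B) (x : B),
      (LinearMap.mul' ℂ B) ((TensorProduct.map S T) (mdag x))
        = ∑ i, ∑ j, ψ (star (f i * f j) * x) • (S (f i) * T (f j)) := by
    intro S T x
    rw [hdc x, map_sum, map_sum]
    refine Finset.sum_congr rfl fun i _ => ?_
    rw [map_sum, map_sum]
    refine Finset.sum_congr rfl fun j _ => ?_
    rw [map_smul, map_smul, TensorProduct.map_tmul, LinearMap.mul'_apply]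
  -- hypothesis translations
  have hAA : ∀ x : B, ∑ i, ∑ j, ψ (star (f i * f j) * x) • (A (f i) * A (f j))
      = ((δ : ℂ) ^ 2) • A x := by
    intro x
    have h1 := congrArg (fun (L : B →ₗ[ℂ] B) => L x) hSchur
    simp only [LinearMap.smul_apply, LinearMap.comp_apply] at h1
    rw [← hmul A A x]
    exact h1.symm
  have hII : ∀ x : B, ∑ i, ∑ j, ψ (star (f i * f j) * x) • (f i * f j)
      = ((δ : ℂ) ^ 2) • x := by
    intro x
    have h1 := congrArg (fun (L : B →ₗ[ℂ] B) => L x) hδform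
    simp only [LinearMap.smul_apply, LinearMap.comp_apply, LinearMap.id_apply] at h1
    have h2 := hmul LinearMap.id LinearMap.id x
    rw [TensorProduct.map_id] at h2
    simp only [LinearMap.id_apply] at h2
    exact h2.symm.trans h1
  -- scalar toolbox
  have hID8 : ∀ z : B, ∑ i, ψ (star (f i) * z) * ψ (f i) = ψ z := by
    intro z
    conv_rhs => rw [← hexp z]
    rw [map_sum]
    exact Finset.sum_congr rfl fun i _ => by rw [map_smul, smul_eq_mul]
  have hIDc : ∀ x : B, ∑ i, ψ (x * f i) • star (f i) = x := by
    intro x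
    have h0 : ∀ i, ψ (star (f i) * star x) = (starRingEnd ℂ) (ψ (x * f i)) := by
      intro i
      rw [hherm (star x) (f i), star_star]
    calc ∑ i, ψ (x * f i) • star (f i)
        = star (∑ i, ψ (star (f i) * star x) • f i) := by
          rw [star_sum]
          refine Finset.sum_congr rfl fun i _ => ?_
          rw [star_smul, h0 i]
          simp
      _ = star (star x) := by rw [hexp (star x)]
      _ = x := star_star x
  have hID4 : ∀ (x : B) (k : Fin n),
      ∑ i, ψ (x * f i) * ψ (star (f k) * star (f i)) = ψ (star (f k) * x) := by
    intro x k
    conv_rhs => rw [← hIDc x]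
    rw [Finset.mul_sum, map_sum]
    refine Finset.sum_congr rfl fun i _ => ?_
    rw [mul_smul_comm, map_smul, smul_eq_mul]
  have hID1l : ∑ i, ψ (f i) • star (f i) = 1 := by
    have := hIDc 1
    simpa using this
  have hcs : ∀ (i j : Fin n) (x : B),
      ψ (star (f i * f j) * x) = ψ (star (f j) * (star (f i) * x)) := by
    intro i j x
    rw [star_mul, mul_assoc]
  have hpull : ∀ (w z : B) (g : Fin n → ℂ) (u : Fin n → B),
      ψ (star w * ((∑ i, g i • u i) * z)) = ∑ i, g i * ψ (star w * (u i * z)) := by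
    intro w z g u
    rw [Finset.sum_mul, Finset.mul_sum, map_sum]
    exact Finset.sum_congr rfl fun i _ => by
      rw [smul_mul_assoc, mul_smul_comm, map_smul, smul_eq_mul]
  -- left unit law for the Schur product
  have hU1 : ∀ (S : B →ₗ[ℂ] B) (x : B),
      ∑ i, ∑ j, ψ (star (f i * f j) * x) • (ψ (f i) • S (f j)) = S x := by
    intro S x
    have hinner : ∀ j, ∑ i, ψ (star (f i * f j) * x) • (ψ (f i) • S (f j))
        = ψ (star (f j) * x) • S (f j) := by
      intro j
      have h1 : ∑ i, ψ (star (f j) * (star (f i) * x)) * ψ (f i) = ψ (star (f j) * x) := by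
        have h2 := hpull (f j) x (fun i => ψ (f i)) (fun i => star (f i))
        rw [hID1l, one_mul] at h2
        calc ∑ i, ψ (star (f j) * (star (f i) * x)) * ψ (f i)
            = ∑ i, ψ (f i) * ψ (star (f j) * (star (f i) * x)) :=
              Finset.sum_congr rfl fun i _ => mul_comm _ _
          _ = ψ (star (f j) * x) := h2.symm
      calc ∑ i, ψ (star (f i * f j) * x) • (ψ (f i) • S (f j))
          = ∑ i, (ψ (star (f j) * (star (f i) * x)) * ψ (f i)) • S (f j) := by
            refine Finset.sum_congr rfl fun i _ => ?_
            rw [smul_smul, hcs i j x]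
        _ = (∑ i, ψ (star (f j) * (star (f i) * x)) * ψ (f i)) • S (f j) := by
            rw [Finset.sum_smul]
        _ = ψ (star (f j) * x) • S (f j) := by rw [h1]
    rw [Finset.sum_comm]
    rw [Finset.sum_congr rfl fun j _ => hinner j]
    calc ∑ j, ψ (star (f j) * x) • S (f j)
        = S (∑ j, ψ (star (f j) * x) • f j) := by
          rw [map_sum]
          exact Finset.sum_congr rfl fun j _ => (map_smul S _ _).symm
      _ = S x := by rw [hexp x]
  -- right unit law for the Schur product
  have hU2 : ∀ (S : B →ₗ[ℂ] B) (x : B),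
      ∑ i, ∑ j, ψ (star (f i * f j) * x) • (ψ (f j) • S (f i)) = S x := by
    intro S x
    have hinner : ∀ i, ∑ j, ψ (star (f i * f j) * x) • (ψ (f j) • S (f i))
        = ψ (star (f i) * x) • S (f i) := by
      intro i
      have h1 : ∑ j, ψ (star (f j) * (star (f i) * x)) * ψ (f j) = ψ (star (f i) * x) :=
        hID8 (star (f i) * x)
      calc ∑ j, ψ (star (f i * f j) * x) • (ψ (f j) • S (f i))
          = ∑ j, (ψ (star (f j) * (star (f i) * x)) * ψ (f j)) • S (f i) := by
            refine Finset.sum_congr rfl fun j _ => ?_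
            rw [smul_smul, hcs i j x]
        _ = (∑ j, ψ (star (f j) * (star (f i) * x)) * ψ (f j)) • S (f i) := by
            rw [Finset.sum_smul]
        _ = ψ (star (f i) * x) • S (f i) := by rw [h1]
    rw [Finset.sum_congr rfl fun i _ => hinner i]
    calc ∑ i, ψ (star (f i) * x) • S (f i)
        = S (∑ i, ψ (star (f i) * x) • f i) := by
          rw [map_sum]
          exact Finset.sum_congr rfl fun i _ => (map_smul S _ _).symm
      _ = S x := by rw [hexp x]
  -- triple sum permutation helper
  have hperm : ∀ (t : Fin n → Fin n → Fin n → B),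
      ∑ k, ∑ j, ∑ i, t k j i = ∑ i, ∑ j, ∑ k, t k j i := by
    intro t
    calc ∑ k, ∑ j, ∑ i, t k j i = ∑ j, ∑ k, ∑ i, t k j i := Finset.sum_comm
      _ = ∑ j, ∑ i, ∑ k, t k j i := Finset.sum_congr rfl fun j _ => Finset.sum_comm
      _ = ∑ i, ∑ j, ∑ k, t k j i := Finset.sum_comm
  -- left module law
  have hMODL : ∀ (Φ : B →ₗ[ℂ] B →ₗ[ℂ] B) (x y : B),
      ∑ i, ∑ j, ψ (star (f i * f j) * (x * y)) • (Φ (f i)) (f j)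
      = ∑ i, ∑ j, ψ (star (f i * f j) * y) • (Φ (x * f i)) (f j) := by
    intro Φ x y
    have hinner : ∀ k j, ∑ i, ψ (star (f i * f j) * y) * ψ (star (f k) * (x * f i))
        = ψ (star (f k * f j) * (x * y)) := by
      intro k j
      have h2 := hpull (f j) y (fun i => ψ ((star (f k) * x) * f i)) (fun i => star (f i))
      rw [hIDc (star (f k) * x)] at h2
      calc ∑ i, ψ (star (f i * f j) * y) * ψ (star (f k) * (x * f i))
          = ∑ i, ψ ((star (f k) * x) * f i) * ψ (star (f j) * (star (f i) * y)) := by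
            refine Finset.sum_congr rfl fun i _ => ?_
            rw [hcs i j y, ← mul_assoc (star (f k)) x (f i)]
            ring
        _ = ψ (star (f j) * ((star (f k) * x) * y)) := h2.symm
        _ = ψ (star (f k * f j) * (x * y)) := by rw [hcs k j (x * y), mul_assoc]
    calc ∑ i, ∑ j, ψ (star (f i * f j) * (x * y)) • (Φ (f i)) (f j)
        = ∑ k, ∑ j, ∑ i, (ψ (star (f i * f j) * y) * ψ (star (f k) * (x * f i)))
            • (Φ (f k)) (f j) := by
          refine Finset.sum_congr rfl fun k _ => Finset.sum_congr rfl fun j _ => ?_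
          rw [← Finset.sum_smul, hinner k j]
      _ = ∑ i, ∑ j, ∑ k, (ψ (star (f i * f j) * y) * ψ (star (f k) * (x * f i)))
            • (Φ (f k)) (f j) := hperm _
      _ = ∑ i, ∑ j, ψ (star (f i * f j) * y) • (Φ (x * f i)) (f j) := by
          refine Finset.sum_congr rfl fun i _ => Finset.sum_congr rfl fun j _ => ?_
          conv_rhs => rw [← hexp (x * f i)]
          rw [map_sum, LinearMap.sum_apply, Finset.smul_sum]
          refine Finset.sum_congr rfl fun k _ => ?_
          rw [map_smul, LinearMap.smul_apply, smul_smul]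
  -- right module law
  have hMODR : ∀ (Φ : B →ₗ[ℂ] B →ₗ[ℂ] B) (x y : B),
      ∑ i, ∑ j, ψ (star (f i * f j) * (x * y)) • (Φ (f i)) (f j)
      = ∑ i, ∑ j, ψ (star (f i * f j) * x) • (Φ (f i)) (f j * y) := by
    intro Φ x y
    have hinner : ∀ i l, ∑ j, ψ (star (f i * f j) * x) * ψ (star (f l) * (f j * y))
        = ψ (star (f i * f l) * (x * y)) := by
      intro i l
      have h2 := hpull (f l) y (fun j => ψ (star (f j) * (star (f i) * x))) f
      rw [hexp (star (f i) * x)] at h2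
      calc ∑ j, ψ (star (f i * f j) * x) * ψ (star (f l) * (f j * y))
          = ∑ j, ψ (star (f j) * (star (f i) * x)) * ψ (star (f l) * (f j * y)) := by
            refine Finset.sum_congr rfl fun j _ => ?_
            rw [hcs i j x]
        _ = ψ (star (f l) * ((star (f i) * x) * y)) := h2.symm
        _ = ψ (star (f i * f l) * (x * y)) := by rw [hcs i l (x * y), mul_assoc]
    calc ∑ i, ∑ j, ψ (star (f i * f j) * (x * y)) • (Φ (f i)) (f j)
        = ∑ i, ∑ l, ∑ j, (ψ (star (f i * f j) * x) * ψ (star (f l) * (f j * y)))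
            • (Φ (f i)) (f l) := by
          refine Finset.sum_congr rfl fun i _ => Finset.sum_congr rfl fun l _ => ?_
          rw [← Finset.sum_smul, hinner i l]
      _ = ∑ i, ∑ j, ∑ l, (ψ (star (f i * f j) * x) * ψ (star (f l) * (f j * y)))
            • (Φ (f i)) (f l) := Finset.sum_congr rfl fun i _ => Finset.sum_comm
      _ = ∑ i, ∑ j, ψ (star (f i * f j) * x) • (Φ (f i)) (f j * y) := by
          refine Finset.sum_congr rfl fun i _ => Finset.sum_congr rfl fun j _ => ?_
          conv_rhs => rw [← hexp (f j * y)]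
          rw [map_sum, Finset.smul_sum]
          refine Finset.sum_congr rfl fun l _ => ?_
          rw [map_smul, smul_smul]
  -- flip law: reality turns left Schur-multiplication by the identity into the right one
  have hFLIP : ∀ x : B,
      ∑ i, ∑ j, ψ (star (f i * f j) * x) • (f i * A (f j))
      = star (∑ i, ∑ j, ψ (star (f i * f j) * star x) • (A (f i) * f j)) := by
    intro x
    have hterm : ∀ i j, star (ψ (star (f i * f j) * star x) • (A (f i) * f j))
        = ψ (x * (f i * f j)) • (star (f j) * A (star (f i))) := by
      intro i j
      rw [star_smul]
      congr 1
      · have h2 := hstar1 (x * (f i * f j))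
        rw [star_mul x (f i * f j)] at h2
        rw [h2]
        simp
      · rw [star_mul (A (f i)) (f j), hreal (f i)]
    have hstep1 : ∀ i, star (∑ j, ψ (star (f i * f j) * star x) • (A (f i) * f j))
        = (x * f i) * A (star (f i)) := by
      intro i
      rw [star_sum]
      rw [Finset.sum_congr rfl fun j _ => hterm i j]
      have h3 : ∀ j, ψ (x * (f i * f j)) • (star (f j) * A (star (f i)))
          = (ψ ((x * f i) * f j) • star (f j)) * A (star (f i)) := by
        intro j
        rw [smul_mul_assoc, mul_assoc]
      rw [Finset.sum_congr rfl fun j _ => h3 j, ← Finset.sum_mul, hIDc (x * f i)]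
    have hstep2 : ∀ i, (x * f i) * A (star (f i))
        = ∑ k, ψ (star (f k) * star (f i)) • ((x * f i) * A (f k)) := by
      intro i
      conv_lhs => rw [← hexp (star (f i))]
      rw [map_sum, Finset.mul_sum]
      exact Finset.sum_congr rfl fun k _ => by rw [map_smul, mul_smul_comm]
    have hstep3 : ∀ k, ∑ i, ψ (star (f k) * star (f i)) • ((x * f i) * A (f k))
        = ∑ l, ψ (star (f l * f k) * x) • (f l * A (f k)) := by
      intro k
      have h4 : ∀ i, (x * f i) * A (f k)
          = ∑ l, ψ (star (f l) * (x * f i)) • (f l * A (f k)) := by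
        intro i
        conv_lhs => rw [← hexp (x * f i)]
        rw [Finset.sum_mul]
        exact Finset.sum_congr rfl fun l _ => by rw [smul_mul_assoc]
      calc ∑ i, ψ (star (f k) * star (f i)) • ((x * f i) * A (f k))
          = ∑ i, ∑ l, (ψ ((star (f l) * x) * f i) * ψ (star (f k) * star (f i)))
              • (f l * A (f k)) := by
            refine Finset.sum_congr rfl fun i _ => ?_
            rw [h4 i, Finset.smul_sum]
            refine Finset.sum_congr rfl fun l _ => ?_
            rw [smul_smul, mul_assoc (star (f l)) x (f i)]
            ring_nf
        _ = ∑ l, ∑ i, (ψ ((star (f l) * x) * f i) * ψ (star (f k) * star (f i)))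
              • (f l * A (f k)) := Finset.sum_comm
        _ = ∑ l, ψ (star (f l * f k) * x) • (f l * A (f k)) := by
            refine Finset.sum_congr rfl fun l _ => ?_
            rw [← Finset.sum_smul, hID4 (star (f l) * x) k, hcs l k x]
    rw [star_sum]
    calc ∑ i, ∑ j, ψ (star (f i * f j) * x) • (f i * A (f j))
        = ∑ k, ∑ l, ψ (star (f l * f k) * x) • (f l * A (f k)) := Finset.sum_comm
      _ = ∑ k, ∑ i, ψ (star (f k) * star (f i)) • ((x * f i) * A (f k)) :=
          Finset.sum_congr rfl fun k _ => (hstep3 k).symm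
      _ = ∑ i, ∑ k, ψ (star (f k) * star (f i)) • ((x * f i) * A (f k)) := Finset.sum_comm
      _ = ∑ i, (x * f i) * A (star (f i)) :=
          Finset.sum_congr rfl fun i _ => (hstep2 i).symm
      _ = ∑ i, star (∑ j, ψ (star (f i * f j) * star x) • (A (f i) * f j)) :=
          Finset.sum_congr rfl fun i _ => (hstep1 i).symm
  -- positivity on squares for real Schur idempotents
  have hPos : ∀ S : B →ₗ[ℂ] B, (∀ w : B, S (star w) = star (S w)) →
      (∀ x : B, ∑ i, ∑ j, ψ (star (f i * f j) * x) • (S (f i) * S (f j))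
        = ((δ : ℂ) ^ 2) • S x) →
      ∀ a v : B, 0 ≤ (ψ (star v * (S (star a * a) * v))).re
        ∧ (ψ (star v * (S (star a * a) * v))).im = 0 := by
    intro S hSreal hSch a v
    set Φ : B →ₗ[ℂ] B →ₗ[ℂ] B := (LinearMap.mul ℂ B).compl₁₂ S S with hΦ
    have key : ((δ : ℂ) ^ 2) • S (star a * a)
        = ∑ i, ∑ j, ψ (star (f i * f j) * 1) • (S (star a * f i) * S (f j * a)) := by
      rw [← hSch (star a * a)]
      have e1 := hMODL Φ (star a) a
      have e2 := hMODR (Φ ∘ₗ LinearMap.mulLeft ℂ (star a)) 1 a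
      rw [one_mul] at e2
      calc ∑ i, ∑ j, ψ (star (f i * f j) * (star a * a)) • (S (f i) * S (f j))
          = ∑ i, ∑ j, ψ (star (f i * f j) * (star a * a)) • (Φ (f i)) (f j) := rfl
        _ = ∑ i, ∑ j, ψ (star (f i * f j) * a) • (Φ (star a * f i)) (f j) := e1
        _ = ∑ i, ∑ j, ψ (star (f i * f j) * a)
              • ((Φ ∘ₗ LinearMap.mulLeft ℂ (star a)) (f i)) (f j) := rfl
        _ = ∑ i, ∑ j, ψ (star (f i * f j) * 1)
              • ((Φ ∘ₗ LinearMap.mulLeft ℂ (star a)) (f i)) (f j * a) := e2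
        _ = ∑ i, ∑ j, ψ (star (f i * f j) * 1) • (S (star a * f i) * S (f j * a)) := rfl
    have hg : ∀ i, ∑ j, ψ (star (f i * f j) * 1) • (S (f j * a) * v)
        = S (star (f i) * a) * v := by
      intro i
      have h1 : ∀ j, ψ (star (f i * f j) * 1) = ψ (star (f j) * star (f i)) := by
        intro j
        rw [mul_one, star_mul]
      calc ∑ j, ψ (star (f i * f j) * 1) • (S (f j * a) * v)
          = ∑ j, ψ (star (f j) * star (f i)) • (S (f j * a) * v) :=
            Finset.sum_congr rfl fun j _ => by rw [h1 j]
        _ = S ((∑ j, ψ (star (f j) * star (f i)) • f j) * a) * v := by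
            rw [Finset.sum_mul, map_sum, Finset.sum_mul]
            exact Finset.sum_congr rfl fun j _ => by
              rw [smul_mul_assoc, map_smul, smul_mul_assoc]
        _ = S (star (f i) * a) * v := by rw [hexp (star (f i))]
    have hq : ((δ : ℂ) ^ 2) * ψ (star v * (S (star a * a) * v))
        = ∑ i, ψ (star (S (star (f i) * a) * v) * (S (star (f i) * a) * v)) := by
      have e3 : ((δ : ℂ) ^ 2) * ψ (star v * (S (star a * a) * v))
          = ψ (star v * ((((δ : ℂ) ^ 2) • S (star a * a)) * v)) := by
        rw [smul_mul_assoc, mul_smul_comm, map_smul, smul_eq_mul]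
      rw [e3, key]
      have e4 : (∑ i, ∑ j, ψ (star (f i * f j) * 1) • (S (star a * f i) * S (f j * a))) * v
          = ∑ i, star (S (star (f i) * a)) * (S (star (f i) * a) * v) := by
        rw [Finset.sum_mul]
        refine Finset.sum_congr rfl fun i _ => ?_
        calc (∑ j, ψ (star (f i * f j) * 1) • (S (star a * f i) * S (f j * a))) * v
            = S (star a * f i) * ∑ j, ψ (star (f i * f j) * 1) • (S (f j * a) * v) := by
              rw [Finset.sum_mul, Finset.mul_sum]
              refine Finset.sum_congr rfl fun j _ => ?_
              rw [smul_mul_assoc, mul_smul_comm, mul_assoc]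
          _ = S (star a * f i) * (S (star (f i) * a) * v) := by rw [hg i]
          _ = star (S (star (f i) * a)) * (S (star (f i) * a) * v) := by
              rw [← hSreal (star (f i) * a), star_mul, star_star]
      rw [e4, Finset.mul_sum, map_sum]
      exact Finset.sum_congr rfl fun i _ => by rw [star_mul, mul_assoc]
    set t : ℂ := ∑ i, ψ (star (S (star (f i) * a) * v) * (S (star (f i) * a) * v)) with ht
    have htre : 0 ≤ t.re := by
      rw [ht, Complex.re_sum]
      exact Finset.sum_nonneg fun i _ => hre _
    have htim : t.im = 0 := by
      rw [ht, Complex.im_sum]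
      exact Finset.sum_eq_zero fun i _ => (hψpos _).2
    have hw : ψ (star v * (S (star a * a) * v)) = (((δ ^ 2)⁻¹ : ℝ) : ℂ) * t := by
      have hcast : (((δ ^ 2)⁻¹ : ℝ) : ℂ) = ((δ : ℂ) ^ 2)⁻¹ := by push_cast; ring
      rw [hcast, eq_inv_mul_iff_mul_eq₀ hδ2ne]
      exact hq
    constructor
    · rw [hw, Complex.re_ofReal_mul]
      positivity
    · rw [hw, Complex.im_ofReal_mul, htim, mul_zero]
  -- iterated positivity
  have hPos2 : ∀ S : B →ₗ[ℂ] B, (∀ w : B, S (star w) = star (S w)) →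
      (∀ x : B, ∑ i, ∑ j, ψ (star (f i * f j) * x) • (S (f i) * S (f j))
        = ((δ : ℂ) ^ 2) • S x) →
      ∀ a v : B, 0 ≤ (ψ (star v * (S (S (star a * a)) * v))).re := by
    intro S hSreal hSch a v
    have hz : star (S (star a * a)) = S (star a * a) := by
      calc star (S (star a * a)) = S (star (star a * a)) := (hSreal _).symm
        _ = S (star a * a) := by rw [star_mul, star_star]
    obtain ⟨b, hb⟩ := gns_sqrt ψ hherm hre hψfaith (S (star a * a)) hz
      (fun w => (hPos S hSreal hSch a w).1)
    have h5 := (hPos S hSreal hSch b v).1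
    rw [hb] at h5
    exact h5
  -- eigenvalues are real, with self-adjoint eigenvectors
  have hEigen : ∀ lam : ℂ, lam ∈ spectrum ℂ A → lam.im = 0 ∧
      ∃ x : B, x ≠ 0 ∧ star x = x ∧ A x = ((lam.re : ℝ) : ℂ) • x := by
    intro lam hlam
    have heval : Module.End.HasEigenvalue A lam :=
      Module.End.hasEigenvalue_iff_mem_spectrum.mpr hlam
    obtain ⟨x₀, hx₀⟩ := heval.exists_hasEigenvector
    have hx0ne : x₀ ≠ 0 := hx₀.right
    have hx0eig : A x₀ = lam • x₀ := Module.End.mem_eigenspace_iff.mp hx₀.left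
    have hψx : ψ (star x₀ * x₀) ≠ 0 := fun h => hx0ne (hψfaith _ h)
    have him : lam.im = 0 := by
      have h1 : ψ (star x₀ * A x₀) = lam * ψ (star x₀ * x₀) := by
        rw [hx0eig, mul_smul_comm, map_smul, smul_eq_mul]
      have h2 : ψ (star x₀ * A x₀) = (starRingEnd ℂ) lam * ψ (star x₀ * x₀) := by
        rw [← hsa x₀ x₀, hx0eig, star_smul, smul_mul_assoc, map_smul, smul_eq_mul]
        rfl
      have h3 : lam = (starRingEnd ℂ) lam := mul_right_cancel₀ hψx (h1.symm.trans h2)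
      have h4 := congrArg Complex.im h3
      simp only [Complex.conj_im] at h4
      linarith
    have hlamre : lam = ((lam.re : ℝ) : ℂ) := by
      apply Complex.ext
      · simp
      · simp [him]
    refine ⟨him, ?_⟩
    have hstareig : A (star x₀) = ((lam.re : ℝ) : ℂ) • star x₀ := by
      rw [hreal x₀, hx0eig, star_smul]
      congr 1
      rw [hlamre]
      simp [Complex.conj_ofReal]
    by_cases hy : x₀ + star x₀ = 0
    · refine ⟨Complex.I • x₀, ?_, ?_, ?_⟩
      · simp only [ne_eq, smul_eq_zero, Complex.I_ne_zero, false_or]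
        exact hx0ne
      · have hneg : star x₀ = -x₀ := by
          have := neg_eq_of_add_eq_zero_right hy
          rw [← this]
        rw [star_smul, hneg]
        simp [Complex.star_def, Complex.conj_I]
      · rw [map_smul, hx0eig, ← hlamre, smul_comm]
    · refine ⟨x₀ + star x₀, hy, ?_, ?_⟩
      · rw [star_add, star_star, add_comm]
      · rw [map_add, hx0eig, hstareig, ← hlamre, smul_add]
  -- the Schur unit
  set J : B →ₗ[ℂ] B := ((δ : ℂ) ^ 2) • (ψ.smulRight (1 : B)) with hJ
  have hJap : ∀ z : B, J z = ((δ : ℂ) ^ 2) • (ψ z • (1 : B)) := by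
    intro z
    rw [hJ, LinearMap.smul_apply, LinearMap.smulRight_apply]
  have hJreal : ∀ w : B, J (star w) = star (J w) := by
    intro w
    rw [hJap, hJap, star_smul, star_smul, star_one, hstar1 w]
    congr 1
    simp
  have hJL : ∀ (S : B →ₗ[ℂ] B) (x : B),
      ∑ i, ∑ j, ψ (star (f i * f j) * x) • (J (f i) * S (f j)) = ((δ : ℂ) ^ 2) • S x := by
    intro S x
    calc ∑ i, ∑ j, ψ (star (f i * f j) * x) • (J (f i) * S (f j))
        = ((δ : ℂ) ^ 2) • ∑ i, ∑ j, ψ (star (f i * f j) * x) • (ψ (f i) • S (f j)) := by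
          rw [Finset.smul_sum]
          refine Finset.sum_congr rfl fun i _ => ?_
          rw [Finset.smul_sum]
          refine Finset.sum_congr rfl fun j _ => ?_
          have h1 : J (f i) * S (f j) = ((δ : ℂ) ^ 2) • (ψ (f i) • S (f j)) := by
            rw [hJap, smul_mul_assoc, smul_mul_assoc, one_mul]
          rw [h1, smul_comm]
      _ = ((δ : ℂ) ^ 2) • S x := by rw [hU1 S x]
  have hJR : ∀ (S : B →ₗ[ℂ] B) (x : B),
      ∑ i, ∑ j, ψ (star (f i * f j) * x) • (S (f i) * J (f j)) = ((δ : ℂ) ^ 2) • S x := by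
    intro S x
    calc ∑ i, ∑ j, ψ (star (f i * f j) * x) • (S (f i) * J (f j))
        = ((δ : ℂ) ^ 2) • ∑ i, ∑ j, ψ (star (f i * f j) * x) • (ψ (f j) • S (f i)) := by
          rw [Finset.smul_sum]
          refine Finset.sum_congr rfl fun i _ => ?_
          rw [Finset.smul_sum]
          refine Finset.sum_congr rfl fun j _ => ?_
          have h1 : S (f i) * J (f j) = ((δ : ℂ) ^ 2) • (ψ (f j) • S (f i)) := by
            rw [hJap, mul_smul_comm, mul_smul_comm, mul_one]
          rw [h1, smul_comm]
      _ = ((δ : ℂ) ^ 2) • S x := by rw [hU2 S x]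
  have hJI : ∀ x : B, ∑ i, ∑ j, ψ (star (f i * f j) * x) • (J (f i) * f j)
      = ((δ : ℂ) ^ 2) • x := by
    intro x
    have h0 := hJL LinearMap.id x
    simp only [LinearMap.id_apply] at h0
    exact h0
  have hIJ : ∀ x : B, ∑ i, ∑ j, ψ (star (f i * f j) * x) • (f i * J (f j))
      = ((δ : ℂ) ^ 2) • x := by
    intro x
    have h0 := hJR LinearMap.id x
    simp only [LinearMap.id_apply] at h0
    exact h0
  -- value of positivity at (1, 1)
  have hval11 : ∀ S : B →ₗ[ℂ] B,
      ψ (star (1 : B) * (S (star (1 : B) * (1 : B)) * (1 : B))) = ψ (S 1) := by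
    intro S
    rw [star_one, one_mul, one_mul, mul_one]
  constructor
  · -- irreflexive case
    intro hirr
    have hAI : ∀ x : B, ∑ i, ∑ j, ψ (star (f i * f j) * x) • (A (f i) * f j) = 0 := by
      intro x
      have h1 := congrArg (fun (L : B →ₗ[ℂ] B) => L x) hirr
      simp only [LinearMap.comp_apply, LinearMap.zero_apply] at h1
      have h2 := hmul A LinearMap.id x
      simp only [LinearMap.id_apply] at h2
      rw [← h2, h1]
    have hIA : ∀ x : B, ∑ i, ∑ j, ψ (star (f i * f j) * x) • (f i * A (f j)) = 0 := by
      intro x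
      rw [hFLIP x, hAI (star x), star_zero]
    -- the complement is a Schur idempotent
    set S₁ : B →ₗ[ℂ] B := J - A - LinearMap.id with hS₁
    have hS₁real : ∀ w : B, S₁ (star w) = star (S₁ w) := by
      intro w
      rw [hS₁]
      simp only [LinearMap.sub_apply, LinearMap.id_apply]
      rw [hJreal w, hreal w, star_sub, star_sub]
    have hS₁sch : ∀ x : B, ∑ i, ∑ j, ψ (star (f i * f j) * x) • (S₁ (f i) * S₁ (f j))
        = ((δ : ℂ) ^ 2) • S₁ x := by
      intro x
      have hterm : ∀ (i j : Fin n) (c : ℂ), c • (S₁ (f i) * S₁ (f j))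
          = (c • (J (f i) * J (f j)) - c • (J (f i) * A (f j)) - c • (J (f i) * f j))
            - (c • (A (f i) * J (f j)) - c • (A (f i) * A (f j)) - c • (A (f i) * f j))
            - (c • (f i * J (f j)) - c • (f i * A (f j)) - c • (f i * f j)) := by
        intro i j c
        simp only [hS₁, LinearMap.sub_apply, LinearMap.id_apply, sub_mul, mul_sub, smul_sub]
        abel
      calc ∑ i, ∑ j, ψ (star (f i * f j) * x) • (S₁ (f i) * S₁ (f j))
          = ∑ i, ∑ j,
            ((ψ (star (f i * f j) * x) • (J (f i) * J (f j))
              - ψ (star (f i * f j) * x) • (J (f i) * A (f j))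
              - ψ (star (f i * f j) * x) • (J (f i) * f j))
            - (ψ (star (f i * f j) * x) • (A (f i) * J (f j))
              - ψ (star (f i * f j) * x) • (A (f i) * A (f j))
              - ψ (star (f i * f j) * x) • (A (f i) * f j))
            - (ψ (star (f i * f j) * x) • (f i * J (f j))
              - ψ (star (f i * f j) * x) • (f i * A (f j))
              - ψ (star (f i * f j) * x) • (f i * f j))) :=
            Finset.sum_congr rfl fun i _ => Finset.sum_congr rfl fun j _ => hterm i j _
        _ = ((δ : ℂ) ^ 2) • S₁ x := by
            simp only [Finset.sum_sub_distrib]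
            rw [hJL J x, hJL A x, hJI x, hJR A x, hAA x, hAI x, hIJ x, hIA x, hII x]
            rw [hS₁]
            simp only [LinearMap.sub_apply, LinearMap.id_apply]
            module
    have hd0 : 0 ≤ d := by
      have h1 := (hPos A hreal hAA 1 1).1
      rw [hval11 A, hreg1, map_smul, hψ1, smul_eq_mul, mul_one] at h1
      simpa using h1
    have hdup : d ≤ δ ^ 2 - 1 := by
      have h1 := (hPos S₁ hS₁real hS₁sch 1 1).1
      rw [hval11 S₁] at h1
      have h2 : S₁ (1 : B) = ((δ ^ 2 - d - 1 : ℝ) : ℂ) • 1 := by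
        rw [hS₁]
        simp only [LinearMap.sub_apply, LinearMap.id_apply]
        rw [hJap, hψ1, hreg1]
        push_cast
        module
      rw [h2, map_smul, hψ1, smul_eq_mul, mul_one] at h1
      simp only [Complex.ofReal_re] at h1
      linarith
    refine ⟨?_, hd0, hdup⟩
    intro lam hlam
    obtain ⟨him, x, hxne, hxsa, hxeig⟩ := hEigen lam hlam
    have hb := gns_eig_bound ψ hherm hre hψfaith A (hPos2 A hreal hAA) d hreg1
      lam.re x hxne hxsa hxeig
    exact ⟨him, by nlinarith, by nlinarith⟩
  · -- reflexive case
    intro hrefl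
    have hAI : ∀ x : B, ∑ i, ∑ j, ψ (star (f i * f j) * x) • (A (f i) * f j)
        = ((δ : ℂ) ^ 2) • x := by
      intro x
      have h1 := congrArg (fun (L : B →ₗ[ℂ] B) => L x) hrefl
      simp only [LinearMap.comp_apply, LinearMap.smul_apply, LinearMap.id_apply] at h1
      have h2 := hmul A LinearMap.id x
      simp only [LinearMap.id_apply] at h2
      rw [← h2, h1]
    have hIA : ∀ x : B, ∑ i, ∑ j, ψ (star (f i * f j) * x) • (f i * A (f j))
        = ((δ : ℂ) ^ 2) • x := by
      intro x
      rw [hFLIP x, hAI (star x), star_smul, star_star]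
      congr 1
      simp
    -- A - id is a real Schur idempotent
    set T : B →ₗ[ℂ] B := A - LinearMap.id with hT
    have hTreal : ∀ w : B, T (star w) = star (T w) := by
      intro w
      rw [hT]
      simp only [LinearMap.sub_apply, LinearMap.id_apply]
      rw [hreal w, star_sub]
    have hTsch : ∀ x : B, ∑ i, ∑ j, ψ (star (f i * f j) * x) • (T (f i) * T (f j))
        = ((δ : ℂ) ^ 2) • T x := by
      intro x
      have hterm : ∀ (i j : Fin n) (c : ℂ), c • (T (f i) * T (f j))
          = (c • (A (f i) * A (f j)) - c • (A (f i) * f j))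
            - (c • (f i * A (f j)) - c • (f i * f j)) := by
        intro i j c
        simp only [hT, LinearMap.sub_apply, LinearMap.id_apply, sub_mul, mul_sub, smul_sub]
        abel
      calc ∑ i, ∑ j, ψ (star (f i * f j) * x) • (T (f i) * T (f j))
          = ∑ i, ∑ j,
            ((ψ (star (f i * f j) * x) • (A (f i) * A (f j))
              - ψ (star (f i * f j) * x) • (A (f i) * f j))
            - (ψ (star (f i * f j) * x) • (f i * A (f j))
              - ψ (star (f i * f j) * x) • (f i * f j))) :=
            Finset.sum_congr rfl fun i _ => Finset.sum_congr rfl fun j _ => hterm i j _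
        _ = ((δ : ℂ) ^ 2) • T x := by
            simp only [Finset.sum_sub_distrib]
            rw [hAA x, hAI x, hIA x, hII x, hT]
            simp only [LinearMap.sub_apply, LinearMap.id_apply]
            module
    -- J - A is a real Schur idempotent
    set S₂ : B →ₗ[ℂ] B := J - A with hS₂
    have hS₂real : ∀ w : B, S₂ (star w) = star (S₂ w) := by
      intro w
      rw [hS₂]
      simp only [LinearMap.sub_apply]
      rw [hJreal w, hreal w, star_sub]
    have hS₂sch : ∀ x : B, ∑ i, ∑ j, ψ (star (f i * f j) * x) • (S₂ (f i) * S₂ (f j))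
        = ((δ : ℂ) ^ 2) • S₂ x := by
      intro x
      have hterm : ∀ (i j : Fin n) (c : ℂ), c • (S₂ (f i) * S₂ (f j))
          = (c • (J (f i) * J (f j)) - c • (J (f i) * A (f j)))
            - (c • (A (f i) * J (f j)) - c • (A (f i) * A (f j))) := by
        intro i j c
        simp only [hS₂, LinearMap.sub_apply, sub_mul, mul_sub, smul_sub]
        abel
      calc ∑ i, ∑ j, ψ (star (f i * f j) * x) • (S₂ (f i) * S₂ (f j))
          = ∑ i, ∑ j,
            ((ψ (star (f i * f j) * x) • (J (f i) * J (f j))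
              - ψ (star (f i * f j) * x) • (J (f i) * A (f j)))
            - (ψ (star (f i * f j) * x) • (A (f i) * J (f j))
              - ψ (star (f i * f j) * x) • (A (f i) * A (f j)))) :=
            Finset.sum_congr rfl fun i _ => Finset.sum_congr rfl fun j _ => hterm i j _
        _ = ((δ : ℂ) ^ 2) • S₂ x := by
            simp only [Finset.sum_sub_distrib]
            rw [hJL J x, hJL A x, hJR A x, hAA x, hS₂]
            simp only [LinearMap.sub_apply]
            module
    have hT1 : T (1 : B) = ((d - 1 : ℝ) : ℂ) • 1 := by
      rw [hT]
      simp only [LinearMap.sub_apply, LinearMap.id_apply]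
      rw [hreg1]
      push_cast
      module
    have hd1 : 1 ≤ d := by
      have h1 := (hPos T hTreal hTsch 1 1).1
      rw [hval11 T, hT1, map_smul, hψ1, smul_eq_mul, mul_one] at h1
      simp only [Complex.ofReal_re] at h1
      linarith
    have hdup : d ≤ δ ^ 2 := by
      have h1 := (hPos S₂ hS₂real hS₂sch 1 1).1
      rw [hval11 S₂] at h1
      have h2 : S₂ (1 : B) = ((δ ^ 2 - d : ℝ) : ℂ) • 1 := by
        rw [hS₂]
        simp only [LinearMap.sub_apply]
        rw [hJap, hψ1, hreg1]
        push_cast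
        module
      rw [h2, map_smul, hψ1, smul_eq_mul, mul_one] at h1
      simp only [Complex.ofReal_re] at h1
      linarith
    refine ⟨?_, hd1, hdup⟩
    intro lam hlam
    obtain ⟨him, x, hxne, hxsa, hxeig⟩ := hEigen lam hlam
    have hTeig : T x = ((lam.re - 1 : ℝ) : ℂ) • x := by
      rw [hT]
      simp only [LinearMap.sub_apply, LinearMap.id_apply]
      rw [hxeig]
      push_cast
      module
    have hb := gns_eig_bound ψ hherm hre hψfaith T (hPos2 T hTreal hTsch) (d - 1) hT1
      (lam.re - 1) x hxne hxsa hTeig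
    exact ⟨him, by nlinarith, by nlinarith⟩
end

section
/- Let M be a finite-dimensional von Neumann algebra and p ∈ M a projection. Then p is central (px = xp for all x ∈ M) if and only if the left ideal pM is linearly spanned by projections of M contained in pM. -/
/-!
If `p` is central and `y = p x`, then `star y = p (star y)` as well, so the real and
imaginary parts of `y` are self-adjoint elements of `pM`. In finite dimension a self-adjoint
`a` has finite spectrum and is the real combination `∑ μ • e_μ` of its spectral projections;
for `μ ≠ 0` we have `e_μ = a f(a)` with `f = μ⁻¹ 1_{μ}`, so `e_μ ∈ pM` whenever `p a = a`.

Conversely, a projection `q = p x` satisfies `q = star q = q p`, so if such projections span `pM`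
then `p z p = p z` for all `z`; applying this to `star z` and taking adjoints gives `p z = z p`.
-/

open ComplexStarModule

theorem spectrum_finite_of_finiteDimensional {K A : Type*} [Field K] [Ring A] [Algebra K A]
    [FiniteDimensional K A] (a : A) : (spectrum K a).Finite := by
  rcases subsingleton_or_nontrivial A with _ | _
  · simp [spectrum.of_subsingleton]
  refine (Polynomial.finite_setOfPred_isRoot
    (minpoly.ne_zero (Algebra.IsIntegral.isIntegral a))).subset fun k hk => ?_
  have := spectrum.subset_polynomial_aeval a (minpoly K a) ⟨k, hk, rfl⟩
  rwa [minpoly.aeval, spectrum.zero_eq, Set.mem_singleton_iff] at this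

section SpectralProjection

variable {A : Type*} [Ring A] [StarRing A] [TopologicalSpace A] [Algebra ℝ A]
  [ContinuousFunctionalCalculus ℝ A IsSelfAdjoint]

/-- Only meaningful for finite spectrum: otherwise the indicator of `{μ}` need not be continuous
on the spectrum and `cfc` returns the junk value `0`. -/
noncomputable def spectralProjection (a : A) (μ : ℝ) : A :=
  cfc (fun x : ℝ => if x = μ then 1 else 0) a

theorem isStarProjection_spectralProjection {a : A} (hfin : (spectrum ℝ a).Finite) (μ : ℝ) :
    IsStarProjection (spectralProjection a μ) where
  isIdempotentElem := by
    rw [IsIdempotentElem, spectralProjection,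
      ← cfc_mul _ _ a (hfin.continuousOn _) (hfin.continuousOn _)]
    congr! 2 with x
    split_ifs <;> simp
  isSelfAdjoint := cfc_predicate _ a

theorem spectralProjection_eq_mul {a : A} (hfin : (spectrum ℝ a).Finite) (ha : IsSelfAdjoint a)
    {μ : ℝ} (hμ : μ ≠ 0) :
    spectralProjection a μ = a * cfc (fun x : ℝ => if x = μ then μ⁻¹ else 0) a :=
  calc spectralProjection a μ
      = cfc (fun x : ℝ => x * if x = μ then μ⁻¹ else 0) a :=
        cfc_congr fun x _ => by split_ifs with h <;> simp [h, hμ]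
    _ = a * cfc (fun x : ℝ => if x = μ then μ⁻¹ else 0) a := by
        rw [cfc_mul _ _ a (hfin.continuousOn _) (hfin.continuousOn _), cfc_id' ℝ a ha]

theorem sum_smul_spectralProjection {a : A} (hfin : (spectrum ℝ a).Finite)
    (ha : IsSelfAdjoint a) : ∑ μ ∈ hfin.toFinset, μ • spectralProjection a μ = a := by
  simp_rw [spectralProjection, ← cfc_smul _ _ a (hfin.continuousOn _)]
  rw [← cfc_sum _ a _ fun _ _ => hfin.continuousOn _]
  conv_rhs => rw [← cfc_id' ℝ a ha]
  refine cfc_congr fun x hx => ?_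
  simp [hfin.mem_toFinset.mpr hx]

theorem IsSelfAdjoint.mem_span_isStarProjection_mul {a : A} (ha : IsSelfAdjoint a)
    (hfin : (spectrum ℝ a).Finite) :
    a ∈ Submodule.span ℝ {q | IsStarProjection q ∧ ∃ y, q = a * y} := by
  have := Submodule.sum_mem (Submodule.span ℝ {q | IsStarProjection q ∧ ∃ y, q = a * y})
    (t := hfin.toFinset) (f := fun μ => μ • spectralProjection a μ) fun μ _ => by
      rcases eq_or_ne μ 0 with rfl | hμ
      · simp
      exact Submodule.smul_mem _ _ (Submodule.subset_span
        ⟨isStarProjection_spectralProjection hfin μ, _, spectralProjection_eq_mul hfin ha hμ⟩)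
  rwa [sum_smul_spectralProjection hfin ha] at this

end SpectralProjection

theorem mul_realPart_of_mul_eq {A : Type*} [Ring A] [StarRing A] [Algebra ℂ A] [StarModule ℂ A]
    {p y : A} (h : p * y = y) (h' : p * star y = star y) : p * (ℜ y : A) = ℜ y := by
  rw [realPart_apply_coe, mul_smul_comm, mul_add, h, h']

theorem mul_imaginaryPart_of_mul_eq {A : Type*} [Ring A] [StarRing A] [Algebra ℂ A]
    [StarModule ℂ A] {p y : A} (h : p * y = y) (h' : p * star y = star y) :
    p * (ℑ y : A) = ℑ y := by
  rw [imaginaryPart_apply_coe, mul_smul_comm, mul_smul_comm, mul_sub, h, h']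

theorem setOf_isStarProjection_mul_subset {A : Type*} [Semigroup A] [Star A] {p a : A}
    (hpa : p * a = a) :
    {q | IsStarProjection q ∧ ∃ y, q = a * y} ⊆
      {q | (∃ x, q = p * x) ∧ star q = q ∧ q * q = q} := by
  rintro q ⟨hq, y, rfl⟩
  exact ⟨⟨a * y, by rw [← mul_assoc, hpa]⟩, hq.isSelfAdjoint, hq.isIdempotentElem⟩

theorem mem_span_projections_of_mul_eq {M : Type*} [NormedRing M] [StarRing M] [CStarRing M]
    [NormedAlgebra ℂ M] [StarModule ℂ M] [FiniteDimensional ℂ M] {p a : M}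
    (ha : IsSelfAdjoint a) (hpa : p * a = a) :
    a ∈ Submodule.span ℂ {q | (∃ x, q = p * x) ∧ star q = q ∧ q * q = q} := by
  have : CompleteSpace M := FiniteDimensional.complete ℂ M
  let : CStarAlgebra M := {}
  have : FiniteDimensional ℝ M := Module.Finite.trans ℂ M
  exact Submodule.span_le_restrictScalars ℝ ℂ _ <| Submodule.span_mono
    (setOf_isStarProjection_mul_subset hpa)
    (ha.mem_span_isStarProjection_mul (spectrum_finite_of_finiteDimensional a))

theorem mul_eq_self_of_mem_span_projections {R A : Type*} [CommSemiring R] [Semiring A]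
    [StarRing A] [Algebra R A] {p z : A} (hpstar : star p = p) (hpidem : p * p = p)
    (hz : z ∈ Submodule.span R {q | (∃ x, q = p * x) ∧ star q = q ∧ q * q = q}) :
    z * p = z := by
  suffices Submodule.span R {q | (∃ x, q = p * x) ∧ star q = q ∧ q * q = q} ≤
      LinearMap.eqLocus (LinearMap.mulRight R p) LinearMap.id from this hz
  rw [Submodule.span_le]
  rintro q ⟨⟨x, rfl⟩, hq, -⟩
  change p * x * p = p * x
  rw [← hq, star_mul, hpstar, mul_assoc, hpidem]

theorem mul_comm_of_forall_mul_mul_eq {A : Type*} [Semigroup A] [StarMul A] {p : A}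
    (hp : star p = p) (h : ∀ z, p * z * p = p * z) (x : A) : p * x = x * p :=
  calc p * x = p * x * p := (h x).symm
    _ = star (p * star x * p) := by simp only [star_mul, star_star, hp, mul_assoc]
    _ = x * p := by rw [h, star_mul, star_star, hp]

/-- Let `M` be a finite-dimensional von Neumann algebra (modelled
as a finite-dimensional C*-algebra) and `p ∈ M` a projection.  Then `p` is central
if and only if the left ideal `pM` is linearly spanned by the projections of `M`
contained in `pM`. -/
theorem central_iff_span_of_projections
    (M : Type*) [NormedRing M] [StarRing M] [CStarRing M] [NormedAlgebra ℂ M]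
    [StarModule ℂ M] [FiniteDimensional ℂ M]
    (p : M) (hpstar : star p = p) (hpidem : p * p = p) :
    (∀ x : M, p * x = x * p) ↔
      Submodule.span ℂ
          {q : M | (∃ x : M, q = p * x) ∧ star q = q ∧ q * q = q}
        = LinearMap.range (LinearMap.mulLeft ℂ p) := by
  constructor
  · intro hcentral
    refine le_antisymm (Submodule.span_le.mpr fun q ⟨⟨x, hx⟩, _⟩ => ⟨x, hx.symm⟩) ?_
    rintro _ ⟨x, rfl⟩
    have hy : p * (p * x) = p * x := by rw [← mul_assoc, hpidem]
    have hy' : p * star (p * x) = star (p * x) := by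
      rw [star_mul, hpstar, ← hcentral (star x), ← mul_assoc, hpidem]
    rw [LinearMap.mulLeft_apply, ← realPart_add_I_smul_imaginaryPart (p * x)]
    exact add_mem (mem_span_projections_of_mul_eq (ℜ _).prop (mul_realPart_of_mul_eq hy hy'))
      (Submodule.smul_mem _ _
        (mem_span_projections_of_mul_eq (ℑ _).prop (mul_imaginaryPart_of_mul_eq hy hy')))
  · intro hspan
    refine mul_comm_of_forall_mul_mul_eq hpstar fun z => ?_
    have hz : p * z ∈ Submodule.span ℂ {q | (∃ x, q = p * x) ∧ star q = q ∧ q * q = q} :=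
      hspan ▸ LinearMap.mem_range_self _ z
    exact mul_eq_self_of_mem_span_projections hpstar hpidem hz
end

section
/- Let (B, ψ, A) be a real quantum graph admitting an alg-2 coloring, i.e. there exist a unital *-algebra 𝒜 and projections P₁, P₂ ∈ B ⊗ 𝒜 with P₁ + P₂ = 1, P₁ ≠ 0 ≠ P₂, and λ(Pⱼ)(A ⊗ 1_𝒜)λ(Pⱼ) = 0 for j = 1, 2, where λ denotes left multiplication on L²(B,ψ) ⊗ 𝒜. Then Spec(A) is symmetric: Spec(A) = −Spec(A). If moreover 𝒜 is finite-dimensional (a q-2 coloring) then the symmetry holds with multiplicities of generalized eigenspaces. -/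
/-! With `u = P₁ - P₂` one has `u² = 1` (as `P₁` is idempotent and `P₁ + P₂ = 1`), and the
coloring conditions say that `A ⊗ 1` has no diagonal blocks with respect to `1 = P₁ + P₂`, so
left multiplication by `u` anticommutes with `A ⊗ 1`. Hence `u` maps the generalized
`μ`-eigenspaces of `A ⊗ 1` isomorphically onto the generalized `-μ`-eigenspaces. By flatness these
are the generalized eigenspaces of `A` tensored with `𝒜`, and tensoring with the nonzero algebra
`𝒜` reflects nontriviality and, when `𝒜` is finite-dimensional, multiplies dimensions by
`dim 𝒜 ≠ 0`. -/

open TensorProduct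

/-- The canonical involution `star (b ⊗ a) = star b ⊗ star a` on `B ⊗ 𝒜`. -/
noncomputable def tensorStar (B 𝒜 : Type*) [Ring B] [Algebra ℂ B] [StarRing B]
    [StarModule ℂ B] [Ring 𝒜] [Algebra ℂ 𝒜] [StarRing 𝒜] [StarModule ℂ 𝒜] :
    TensorProduct ℂ B 𝒜 →+ TensorProduct ℂ B 𝒜 :=
  TensorProduct.liftAddHom
    (AddMonoidHom.mk' (fun b => AddMonoidHom.mk'
        (fun a => star b ⊗ₜ[ℂ] star a)
        (fun a a' => by simp [star_add, TensorProduct.tmul_add]))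
      (fun b b' => AddMonoidHom.ext fun a => by simp [star_add, TensorProduct.add_tmul]))
    (fun c b a => by simp [star_smul, TensorProduct.smul_tmul])

open Module

section Coloring

variable {R : Type*} [Ring R] {e f : R}

theorem sub_mul_self_eq_one_of_add_eq_one (he : IsIdempotentElem e) (hef : e + f = 1) :
    (e - f) * (e - f) = 1 := by
  obtain rfl : f = 1 - e := eq_sub_of_add_eq' hef
  calc (e - (1 - e)) * (e - (1 - e)) = 4 • (e * e - e) + 1 := by noncomm_ring
    _ = 1 := by rw [he.eq, sub_self, smul_zero, zero_add]

theorem mul_map_mul_sub_eq_neg_of_coloring {F : Type*} [FunLike F R R] [AddMonoidHomClass F R R]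
    (T : F) (hef : e + f = 1) (he : ∀ ξ, e * T (e * ξ) = 0) (hf : ∀ ξ, f * T (f * ξ) = 0)
    (ξ : R) : (e - f) * T ((e - f) * ξ) = -T ξ := by
  have hcross : T ξ = e * T (f * ξ) + f * T (e * ξ) :=
    calc T ξ = (e + f) * (T (e * ξ) + T (f * ξ)) := by
          rw [hef, one_mul, ← map_add, ← add_mul, hef, one_mul]
      _ = e * T (f * ξ) + f * T (e * ξ) := by
          rw [add_mul, mul_add, mul_add, he, hf]; abel
  have hsplit : T ((e - f) * ξ) = T (e * ξ) - T (f * ξ) := by rw [sub_mul, map_sub]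
  rw [hsplit, mul_sub, sub_mul, sub_mul, he, hf, hcross]
  abel

theorem exists_linearEquiv_anticomm_of_coloring {K : Type*} [CommSemiring K] [Algebra K R]
    (T : R →ₗ[K] R) (he : IsIdempotentElem e) (hef : e + f = 1)
    (hcole : ∀ ξ, e * T (e * ξ) = 0) (hcolf : ∀ ξ, f * T (f * ξ) = 0) :
    ∃ S : R ≃ₗ[K] R, ∀ ξ, T (S ξ) = -S (T ξ) := by
  have hinv : (e - f) * (e - f) = 1 := sub_mul_self_eq_one_of_add_eq_one he hef
  refine ⟨LinearEquiv.ofInvolutive (LinearMap.mulLeft K (e - f))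
    (by intro ξ; simp [← mul_assoc, hinv]), fun ξ => ?_⟩
  show T ((e - f) * ξ) = -((e - f) * T ξ)
  calc T ((e - f) * ξ) = (e - f) * ((e - f) * T ((e - f) * ξ)) := by
        rw [← mul_assoc, hinv, one_mul]
    _ = -((e - f) * T ξ) := by
        rw [mul_map_mul_sub_eq_neg_of_coloring T hef hcole hcolf, mul_neg]

end Coloring

namespace Module.End

variable {R M : Type*} [CommRing R] [AddCommGroup M] [Module R M]

theorem mapsTo_genEigenspace_neg_of_anticomm {f g : End R M} (h : ∀ x, f (g x) = -g (f x))
    (μ : R) (k : ℕ) : Set.MapsTo g (f.genEigenspace μ k) (f.genEigenspace (-μ) k) := by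
  intro x hx
  have hsemi : SemiconjBy g (-(f - μ • 1)) (f - (-μ) • 1) := by
    ext y
    simp only [neg_sub, mul_apply, LinearMap.sub_apply, LinearMap.smul_apply, one_apply, map_sub,
      map_smul, neg_smul, sub_neg_eq_add, LinearMap.add_apply, h]
    abel
  rw [SetLike.mem_coe, genEigenspace_nat, LinearMap.mem_ker] at hx ⊢
  rw [← Module.End.mul_apply, ← (hsemi.pow_right k).eq, neg_pow, Module.End.mul_apply,
    Module.End.mul_apply, hx, map_zero, map_zero]

theorem map_genEigenspace_of_anticomm (S : M ≃ₗ[R] M) {f : End R M}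
    (h : ∀ x, f (S x) = -S (f x)) (μ : R) (k : ℕ) :
    (f.genEigenspace μ k).map (S : M →ₗ[R] M) = f.genEigenspace (-μ) k := by
  have hsymm : ∀ x, f (S.symm x) = -S.symm (f x) := fun x => S.injective <| by
    rw [map_neg, S.apply_symm_apply, eq_neg_iff_add_eq_zero, ← neg_eq_iff_add_eq_zero, ← h,
      S.apply_symm_apply]
  apply le_antisymm
  · rintro _ ⟨x, hx, rfl⟩
    exact mapsTo_genEigenspace_neg_of_anticomm h μ k hx
  · intro y hy
    refine ⟨S.symm y, ?_, S.apply_symm_apply y⟩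
    simpa using mapsTo_genEigenspace_neg_of_anticomm hsymm (-μ) k (by simpa using hy)

theorem genEigenspace_rTensor (W : Type*) [AddCommGroup W] [Module R W] (f : End R M) (μ : R)
    (k : ℕ) : genEigenspace (f.rTensor W) μ k = LinearMap.ker (((f - μ • 1) ^ k).rTensor W) := by
  rw [genEigenspace_nat, ← LinearMap.rTensor_pow, LinearMap.rTensor_sub, LinearMap.rTensor_smul,
    one_eq_id, one_eq_id, LinearMap.rTensor_id]

end Module.End

noncomputable def Module.Flat.kerRTensorEquiv {R M N : Type*} (W : Type*) [CommRing R]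
    [AddCommGroup M] [Module R M] [AddCommGroup N] [Module R N] [AddCommGroup W] [Module R W]
    [Module.Flat R W] (f : M →ₗ[R] N) :
    LinearMap.ker f ⊗[R] W ≃ₗ[R] LinearMap.ker (f.rTensor W) :=
  (LinearEquiv.ofInjective _ (Module.Flat.rTensor_preserves_injective_linearMap _
      (LinearMap.ker f).injective_subtype)).trans
    (LinearEquiv.ofEq _ _
      (Module.Flat.rTensor_exact W f.exact_subtype_ker_map).linearMap_ker_eq.symm)

section TensorCancellation

variable {K V V' W : Type*} [Field K] [AddCommGroup V] [Module K V] [AddCommGroup V']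
  [Module K V'] [AddCommGroup W] [Module K W] [Nontrivial W]

theorem subsingleton_iff_of_linearEquiv_rTensor (e : V ⊗[K] W ≃ₗ[K] V' ⊗[K] W) :
    Subsingleton V ↔ Subsingleton V' := by
  rw [← Module.FaithfullyFlat.subsingleton_tensorProduct_iff_left K V (N := W),
    e.toEquiv.subsingleton_congr, Module.FaithfullyFlat.subsingleton_tensorProduct_iff_left]

theorem finrank_eq_of_linearEquiv_rTensor [Module.Finite K W] (e : V ⊗[K] W ≃ₗ[K] V' ⊗[K] W) :
    finrank K V = finrank K V' := by
  have h := e.finrank_eq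
  rw [finrank_tensorProduct, finrank_tensorProduct] at h
  exact Nat.eq_of_mul_eq_mul_right finrank_pos h

end TensorCancellation

theorem nonempty_genEigenspace_rTensor_equiv_neg_of_coloring {K B 𝒜 : Type*} [CommRing K]
    [Ring B] [Algebra K B] [Ring 𝒜] [Algebra K 𝒜] [Module.Flat K 𝒜] (A : End K B)
    {P₁ P₂ : B ⊗[K] 𝒜} (hidem : IsIdempotentElem P₁) (hsum : P₁ + P₂ = 1)
    (hcol₁ : ∀ ξ, P₁ * A.rTensor 𝒜 (P₁ * ξ) = 0) (hcol₂ : ∀ ξ, P₂ * A.rTensor 𝒜 (P₂ * ξ) = 0)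
    (μ : K) (k : ℕ) :
    Nonempty (A.genEigenspace μ k ⊗[K] 𝒜 ≃ₗ[K] A.genEigenspace (-μ) k ⊗[K] 𝒜) := by
  obtain ⟨S, hS⟩ := exists_linearEquiv_anticomm_of_coloring _ hidem hsum hcol₁ hcol₂
  have hmap := End.map_genEigenspace_of_anticomm S hS μ k
  rw [End.genEigenspace_rTensor, End.genEigenspace_rTensor] at hmap
  rw [End.genEigenspace_nat, End.genEigenspace_nat]
  exact ⟨Module.Flat.kerRTensorEquiv 𝒜 _ ≪≫ₗ S.submoduleMap _ ≪≫ₗ LinearEquiv.ofEq _ _ hmap ≪≫ₗ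
    (Module.Flat.kerRTensorEquiv 𝒜 _).symm⟩

theorem alg_two_coloring_symmetric_spectrum_general
    (B : Type*) [NormedRing B] [NormedAlgebra ℂ B] [FiniteDimensional ℂ B]
    (A : B →ₗ[ℂ] B)
    (𝒜 : Type*) [Ring 𝒜] [Algebra ℂ 𝒜]
    (P₁ P₂ : TensorProduct ℂ B 𝒜)
    (hidem₁ : P₁ * P₁ = P₁)
    (hsum : P₁ + P₂ = 1) (hne₁ : P₁ ≠ 0)
    (hcol₁ : ∀ ξ : TensorProduct ℂ B 𝒜,
      P₁ * TensorProduct.map A LinearMap.id (P₁ * ξ) = 0)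
    (hcol₂ : ∀ ξ : TensorProduct ℂ B 𝒜,
      P₂ * TensorProduct.map A LinearMap.id (P₂ * ξ) = 0) :
    (∀ lam : ℂ, lam ∈ spectrum ℂ A ↔ -lam ∈ spectrum ℂ A) ∧
      (FiniteDimensional ℂ 𝒜 →
        ∀ lam : ℂ, Module.finrank ℂ (Module.End.maxGenEigenspace A lam)
          = Module.finrank ℂ (Module.End.maxGenEigenspace A (-lam))) := by
  have hequiv := nonempty_genEigenspace_rTensor_equiv_neg_of_coloring A hidem₁ hsum hcol₁ hcol₂
  have : Nontrivial 𝒜 :=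
    (subsingleton_or_nontrivial 𝒜).resolve_left fun _ => hne₁ (Subsingleton.elim _ _)
  refine ⟨fun μ => ?_, fun _ μ => ?_⟩
  · obtain ⟨e⟩ := hequiv μ 1
    rw [Nat.cast_one] at e
    simp only [← End.hasEigenvalue_iff_mem_spectrum, End.hasEigenvalue_iff,
      ← Submodule.nontrivial_iff_ne_bot, ← not_subsingleton_iff_nontrivial]
    exact not_congr (subsingleton_iff_of_linearEquiv_rTensor e)
  · rw [End.maxGenEigenspace_eq_genEigenspace_finrank,
      End.maxGenEigenspace_eq_genEigenspace_finrank]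
    exact finrank_eq_of_linearEquiv_rTensor (hequiv μ _).some

/-- If a real quantum graph `(B, ψ, A)` admits an `alg`-2 coloring
— a unital `*`-algebra `𝒜` and nonzero projections `P₁, P₂ ∈ B ⊗ 𝒜` with
`P₁ + P₂ = 1` and `λ(Pⱼ)(A ⊗ 1)λ(Pⱼ) = 0` — then `Spec(A)` is symmetric.  If moreover
`𝒜` is finite-dimensional (a `q`-2 coloring), the symmetry holds with multiplicities
of generalized eigenspaces. -/
theorem alg_two_coloring_symmetric_spectrum
    (B : Type*) [NormedRing B] [StarRing B] [CStarRing B] [NormedAlgebra ℂ B]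
    [StarModule ℂ B] [FiniteDimensional ℂ B]
    (ψ : B →ₗ[ℂ] ℂ)
    (hψ1 : ψ 1 = 1)
    (hψpos : ∀ x : B, 0 ≤ (ψ (star x * x)).re ∧ (ψ (star x * x)).im = 0)
    (hψfaith : ∀ x : B, ψ (star x * x) = 0 → x = 0)
    (δ : ℝ) (hδ : 0 < δ)
    (mdag : B →ₗ[ℂ] TensorProduct ℂ B B)
    (hmdag : ∀ a b c : B, pairQ B ψ (star b) (star c) (mdag a) = ψ (star (b * c) * a))
    (hδform : LinearMap.mul' ℂ B ∘ₗ mdag = ((δ : ℂ) ^ 2) • LinearMap.id)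
    (A : B →ₗ[ℂ] B)
    (hSchur : ((δ : ℂ) ^ 2) • A = LinearMap.mul' ℂ B ∘ₗ TensorProduct.map A A ∘ₗ mdag)
    (hreal : ∀ x : B, A (star x) = star (A x))
    (𝒜 : Type*) [Ring 𝒜] [Algebra ℂ 𝒜] [StarRing 𝒜] [StarModule ℂ 𝒜]
    (P₁ P₂ : TensorProduct ℂ B 𝒜)
    (hstar₁ : tensorStar B 𝒜 P₁ = P₁) (hstar₂ : tensorStar B 𝒜 P₂ = P₂)
    (hidem₁ : P₁ * P₁ = P₁) (hidem₂ : P₂ * P₂ = P₂)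
    (hsum : P₁ + P₂ = 1) (hne₁ : P₁ ≠ 0) (hne₂ : P₂ ≠ 0)
    (hcol₁ : ∀ ξ : TensorProduct ℂ B 𝒜,
      P₁ * TensorProduct.map A LinearMap.id (P₁ * ξ) = 0)
    (hcol₂ : ∀ ξ : TensorProduct ℂ B 𝒜,
      P₂ * TensorProduct.map A LinearMap.id (P₂ * ξ) = 0) :
    (∀ lam : ℂ, lam ∈ spectrum ℂ A ↔ -lam ∈ spectrum ℂ A) ∧
      (FiniteDimensional ℂ 𝒜 →
        ∀ lam : ℂ, Module.finrank ℂ (Module.End.maxGenEigenspace A lam)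
          = Module.finrank ℂ (Module.End.maxGenEigenspace A (-lam))) :=
  alg_two_coloring_symmetric_spectrum_general B A 𝒜 P₁ P₂ hidem₁ hsum hne₁ hcol₁ hcol₂
end
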